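/- arXiv:2012.02944 — 8 statements merged into one kernel-verified Lean document; each statement's English description precedes it below -/
import Mathlib

section
/- (Lemma 1(ii).) Let Φ₁, Φ₂ be unit vectors in ℂᵈ, let ε ∈ [0, 1], and let (Π₀, Π₁, Π₂) be a three-outcome POVM (positive semidefinite d×d matrices with Π₀ + Π₁ + Π₂ = I) such that ⟨Φ₂, Π₁Φ₂⟩ = 0, ⟨Φ₁, Π₂Φ₁⟩ = 0, ⟨Φ₁, Π₀Φ₁⟩ ≤ ε and ⟨Φ₂, Π₀Φ₂⟩ ≤ ε. Then |⟨Φ₁, Φ₂⟩| ≤ ε. -/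
open Matrix ComplexOrder

/-!
Since `Π₁ Φ₂ = 0` and `Π₂ Φ₁ = 0` (a positive semidefinite matrix kills every vector on which its
quadratic form vanishes), resolving the identity as `Π₀ + Π₁ + Π₂` gives
`⟨Φ₁, Φ₂⟩ = ⟨Φ₁, Π₀ Φ₂⟩`. The Cauchy–Schwarz inequality for the positive semidefinite form
`(x, y) ↦ ⟨x, Π₀ y⟩` bounds this by `√⟨Φ₁, Π₀ Φ₁⟩ · √⟨Φ₂, Π₀ Φ₂⟩ ≤ ε`.
-/

namespace Matrix

variable {n : Type*} [Fintype n]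

theorem PosSemidef.norm_dotProduct_mulVec_sq_le {𝕜 : Type*} [RCLike 𝕜] {M : Matrix n n 𝕜}
    (hM : M.PosSemidef) (x y : n → 𝕜) :
    ‖star x ⬝ᵥ (M *ᵥ y)‖ ^ 2 ≤
      RCLike.re (star x ⬝ᵥ (M *ᵥ x)) * RCLike.re (star y ⬝ᵥ (M *ᵥ y)) := by
  let _ := M.toSeminormedAddCommGroup hM
  let _ := M.toInnerProductSpace hM
  have hcs := inner_mul_inner_self_le (𝕜 := 𝕜) x y
  have hsymm : ‖inner 𝕜 y x‖ = ‖inner 𝕜 x y‖ := norm_inner_symm y x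
  rw [hsymm, ← sq] at hcs
  rwa [dotProduct_comm (star x), dotProduct_comm (star x), dotProduct_comm (star y)]

theorem PosSemidef.norm_dotProduct_mulVec_le_of_le {𝕜 : Type*} [RCLike 𝕜] {M : Matrix n n 𝕜}
    (hM : M.PosSemidef) {x y : n → 𝕜} {ε : ℝ} (hx : RCLike.re (star x ⬝ᵥ (M *ᵥ x)) ≤ ε)
    (hy : RCLike.re (star y ⬝ᵥ (M *ᵥ y)) ≤ ε) :
    ‖star x ⬝ᵥ (M *ᵥ y)‖ ≤ ε := by
  have hx₀ := hM.re_dotProduct_nonneg x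
  have hy₀ := hM.re_dotProduct_nonneg y
  refine le_of_sq_le_sq ?_ (hx₀.trans hx)
  calc ‖star x ⬝ᵥ (M *ᵥ y)‖ ^ 2
      ≤ RCLike.re (star x ⬝ᵥ (M *ᵥ x)) * RCLike.re (star y ⬝ᵥ (M *ᵥ y)) :=
        hM.norm_dotProduct_mulVec_sq_le x y
    _ ≤ ε ^ 2 := by rw [sq]; exact mul_le_mul hx hy hy₀ (hx₀.trans hx)

theorem IsHermitian.star_dotProduct_mulVec_eq_zero {R : Type*} [CommRing R] [StarRing R]
    {A : Matrix n n R} (hA : A.IsHermitian) {x : n → R} (hx : A *ᵥ x = 0) (y : n → R) :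
    star x ⬝ᵥ (A *ᵥ y) = 0 := by
  rw [dotProduct_mulVec, ← hA.eq, ← star_mulVec, hx, star_zero, zero_dotProduct]

theorem dotProduct_eq_dotProduct_mulVec_of_mulVec_eq_zero [DecidableEq n] {R : Type*} [CommRing R]
    [StarRing R]
    {P₀ P₁ P₂ : Matrix n n R} (hsum : P₀ + P₁ + P₂ = 1) (hP₂ : P₂.IsHermitian)
    {x y : n → R} (hy : P₁ *ᵥ y = 0) (hx : P₂ *ᵥ x = 0) :
    star x ⬝ᵥ y = star x ⬝ᵥ (P₀ *ᵥ y) := by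
  conv_lhs => rw [← one_mulVec y, ← hsum]
  rw [add_mulVec, add_mulVec, hy, add_zero, dotProduct_add,
    hP₂.star_dotProduct_mulVec_eq_zero hx, add_zero]

end Matrix

theorem overlap_le_of_one_sided_error_povm_general (d : ℕ) (Φ₁ Φ₂ : Fin d → ℂ)
    (ε : ℝ)
    (P₀ P₁ P₂ : Matrix (Fin d) (Fin d) ℂ)
    (hP₀ : P₀.PosSemidef) (hP₁ : P₁.PosSemidef) (hP₂ : P₂.PosSemidef)
    (hsum : P₀ + P₁ + P₂ = 1)
    (he₁ : star Φ₂ ⬝ᵥ (P₁ *ᵥ Φ₂) = 0) (he₂ : star Φ₁ ⬝ᵥ (P₂ *ᵥ Φ₁) = 0)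
    (hi₁ : star Φ₁ ⬝ᵥ (P₀ *ᵥ Φ₁) ≤ ((ε : ℝ) : ℂ))
    (hi₂ : star Φ₂ ⬝ᵥ (P₀ *ᵥ Φ₂) ≤ ((ε : ℝ) : ℂ)) :
    ‖star Φ₁ ⬝ᵥ Φ₂‖ ≤ ε := by
  have h₁ : P₁ *ᵥ Φ₂ = 0 := (hP₁.dotProduct_mulVec_zero_iff Φ₂).mp he₁
  have h₂ : P₂ *ᵥ Φ₁ = 0 := (hP₂.dotProduct_mulVec_zero_iff Φ₁).mp he₂
  rw [dotProduct_eq_dotProduct_mulVec_of_mulVec_eq_zero hsum hP₂.isHermitian h₁ h₂]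
  exact hP₀.norm_dotProduct_mulVec_le_of_le (Complex.le_def.mp hi₁).1 (Complex.le_def.mp hi₂).1

/-- Lemma 1(ii): one-sided-error (unambiguous) discrimination by a three-outcome POVM
forces the overlap of the two states to be at most `ε`. -/
theorem overlap_le_of_one_sided_error_povm (d : ℕ) (Φ₁ Φ₂ : Fin d → ℂ)
    (hΦ₁ : star Φ₁ ⬝ᵥ Φ₁ = 1) (hΦ₂ : star Φ₂ ⬝ᵥ Φ₂ = 1)
    (ε : ℝ) (hε : ε ∈ Set.Icc (0 : ℝ) 1)
    (P₀ P₁ P₂ : Matrix (Fin d) (Fin d) ℂ)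
    (hP₀ : P₀.PosSemidef) (hP₁ : P₁.PosSemidef) (hP₂ : P₂.PosSemidef)
    (hsum : P₀ + P₁ + P₂ = 1)
    (he₁ : star Φ₂ ⬝ᵥ (P₁ *ᵥ Φ₂) = 0) (he₂ : star Φ₁ ⬝ᵥ (P₂ *ᵥ Φ₁) = 0)
    (hi₁ : star Φ₁ ⬝ᵥ (P₀ *ᵥ Φ₁) ≤ ((ε : ℝ) : ℂ))
    (hi₂ : star Φ₂ ⬝ᵥ (P₀ *ᵥ Φ₂) ≤ ((ε : ℝ) : ℂ)) :
    ‖star Φ₁ ⬝ᵥ Φ₂‖ ≤ ε :=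
  overlap_le_of_one_sided_error_povm_general d Φ₁ Φ₂ ε P₀ P₁ P₂ hP₀ hP₁ hP₂ hsum he₁ he₂ hi₁ hi₂
end

section
/- Let U₁, U₂ be n×n complex unitary matrices and let Φ be a unit vector in ℂⁿ ⊗ ℂᵐ (indexed by Fin n × Fin m). Then |⟨Φ, ((U₁†U₂) ⊗ I_m) Φ⟩| ≥ F(U₁, U₂), where (U₁†U₂) ⊗ I_m is the Kronecker product with the m×m identity matrix. In particular, the fidelity is not decreased by attaching an ancilla. -/
/-!
`V = U₁†U₂` is normal, so it has an orthonormal eigenbasis `b` with eigenvalues `μ`. Cutting `Φ`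
into its ancilla slices `φⱼ = Φ(·, j)` gives `⟨Φ, (V ⊗ I) Φ⟩ = ∑ⱼ ⟨φⱼ, V φⱼ⟩ = ∑ₖ μₖ pₖ` with
`pₖ = ∑ⱼ |⟨bₖ, φⱼ⟩|²`, and the `pₖ` sum to `‖Φ‖² = 1`. The unit vector `ψ = ∑ₖ √pₖ bₖ` of the
system alone has the same expectation `⟨ψ, V ψ⟩ = ∑ₖ μₖ pₖ`, so the overlap is one of the values
whose infimum is the fidelity.
-/

open Matrix Kronecker

/-- The fidelity of two unitary matrices: the infimum of `|⟨ψ, U₁†U₂ ψ⟩|` over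
unit vectors `ψ`. -/
noncomputable def unitaryFidelity (n : ℕ) (U₁ U₂ : Matrix (Fin n) (Fin n) ℂ) : ℝ :=
  sInf { r : ℝ | ∃ ψ : Fin n → ℂ, star ψ ⬝ᵥ ψ = 1 ∧
    r = ‖star ψ ⬝ᵥ ((U₁ᴴ * U₂) *ᵥ ψ)‖ }

open Module.End InnerProductSpace ComplexStarModule

theorem DirectSum.IsInternal.exists_orthonormalBasis_subordinate {𝕜 E ι : Type*} [RCLike 𝕜]
    [NormedAddCommGroup E] [InnerProductSpace 𝕜 E] [FiniteDimensional 𝕜 E] [DecidableEq ι]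
    {V : ι → Submodule 𝕜 E} (hV : DirectSum.IsInternal V)
    (hV' : OrthogonalFamily 𝕜 (fun i => V i) fun i => (V i).subtypeₗᵢ) :
    ∃ b : OrthonormalBasis (Fin (Module.finrank 𝕜 E)) 𝕜 E, ∀ k, ∃ i, b k ∈ V i := by
  have : Fintype {i // V i ≠ ⊥} :=
    (WellFoundedGT.finite_ne_bot_of_iSupIndep hV.submodule_iSupIndep).fintype
  have hV₀ := DirectSum.isInternal_ne_bot_iff.2 hV
  have hV₀' := hV'.comp (Subtype.val_injective (p := fun i => V i ≠ ⊥))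
  exact ⟨hV₀.subordinateOrthonormalBasis rfl hV₀', fun k =>
    ⟨_, hV₀.subordinateOrthonormalBasis_subordinate rfl k hV₀'⟩⟩

section NormalOperator

variable {E : Type*} [NormedAddCommGroup E] [InnerProductSpace ℂ E]

/-- The basis diagonalizes the commuting self-adjoint operators `ℜ T` and `ℑ T` simultaneously. -/
theorem LinearMap.exists_orthonormalBasis_eigenvectors_of_isStarNormal [FiniteDimensional ℂ E]
    {T : E →ₗ[ℂ] E} (hT : IsStarNormal T) :
    ∃ (b : OrthonormalBasis (Fin (Module.finrank ℂ E)) ℂ E) (μ : Fin (Module.finrank ℂ E) → ℂ),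
      ∀ k, T (b k) = μ k • b k := by
  classical
  have hA : (ℜ T : E →ₗ[ℂ] E).IsSymmetric := (isSymmetric_iff_isSelfAdjoint _).2 (ℜ T).2
  have hB : (ℑ T : E →ₗ[ℂ] E).IsSymmetric := (isSymmetric_iff_isSelfAdjoint _).2 (ℑ T).2
  obtain ⟨b, hb⟩ := (hA.directSum_isInternal_of_commute hB
    (Commute.realPart_imaginaryPart T)).exists_orthonormalBasis_subordinate
    (hA.orthogonalFamily_eigenspace_inf_eigenspace hB)
  choose ν hν using hb
  refine ⟨b, fun k => (ν k).2 + Complex.I * (ν k).1, fun k => ?_⟩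
  obtain ⟨hAk, hBk⟩ := Submodule.mem_inf.1 (hν k)
  rw [mem_eigenspace_iff] at hAk hBk
  conv_lhs => rw [← realPart_add_I_smul_imaginaryPart T]
  rw [LinearMap.add_apply, LinearMap.smul_apply, hAk, hBk, smul_smul, add_smul]

variable {ι : Type*} [Fintype ι] {T : E →ₗ[ℂ] E}

theorem OrthonormalBasis.inner_map_self_eq_sum (b : OrthonormalBasis ι ℂ E) {μ : ι → ℂ}
    (hb : ∀ k, T (b k) = μ k • b k) (x : E) :
    ⟪x, T x⟫_ℂ = ∑ k, μ k * (‖⟪b k, x⟫_ℂ‖ ^ 2 : ℝ) := by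
  have hTx : T x = ∑ k, (μ k * ⟪b k, x⟫_ℂ) • b k := by
    conv_lhs => rw [← b.sum_repr' x]
    simp only [map_sum, map_smul, hb, smul_smul, mul_comm]
  rw [hTx, inner_sum]
  refine Finset.sum_congr rfl fun k _ => ?_
  rw [inner_smul_right, ← inner_conj_symm x (b k), mul_assoc, RCLike.mul_conj]
  norm_cast

theorem OrthonormalBasis.exists_inner_map_self_eq_sum (b : OrthonormalBasis ι ℂ E) {μ : ι → ℂ}
    (hb : ∀ k, T (b k) = μ k • b k) {J : Type*} [Fintype J] (φ : J → E)
    (hφ : ∑ j, ‖φ j‖ ^ 2 = 1) :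
    ∃ ψ : E, ‖ψ‖ = 1 ∧ ⟪ψ, T ψ⟫_ℂ = ∑ j, ⟪φ j, T (φ j)⟫_ℂ := by
  set p : ι → ℝ := fun k => ∑ j, ‖⟪b k, φ j⟫_ℂ‖ ^ 2
  set ψ := b.repr.symm (WithLp.toLp 2 fun k => (√(p k) : ℂ))
  have hψ : ∀ k, ‖⟪b k, ψ⟫_ℂ‖ ^ 2 = p k := fun k => by
    rw [← b.repr_apply_apply, LinearIsometryEquiv.apply_symm_apply, PiLp.toLp_apply,
      Complex.norm_real, Real.norm_of_nonneg (Real.sqrt_nonneg _),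
      Real.sq_sqrt (Finset.sum_nonneg fun _ _ => sq_nonneg _)]
  refine ⟨ψ, ?_, ?_⟩
  · rw [← pow_left_inj₀ (norm_nonneg ψ) zero_le_one two_ne_zero, one_pow,
      ← b.sum_sq_norm_inner_right, ← hφ]
    simp only [hψ, p, ← b.sum_sq_norm_inner_right (φ _)]
    exact Finset.sum_comm
  · simp only [b.inner_map_self_eq_sum hb, hψ, p, Complex.ofReal_sum, Finset.mul_sum]
    exact Finset.sum_comm

end NormalOperator

section EuclideanMatrix

variable {𝕜 ι : Type*} [RCLike 𝕜] [Fintype ι] [DecidableEq ι]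

theorem Matrix.isStarNormal_toEuclideanLin {A : Matrix ι ι 𝕜} (hA : IsStarNormal A) :
    IsStarNormal (toEuclideanLin A) := by
  constructor
  rw [LinearMap.star_eq_adjoint, ← toEuclideanLin_conjTranspose_eq_adjoint, Commute, SemiconjBy,
    Module.End.mul_eq_comp, Module.End.mul_eq_comp, ← toLpLin_mul_same, ← toLpLin_mul_same,
    ← star_eq_conjTranspose, hA.star_comm_self]

omit [DecidableEq ι] in
theorem EuclideanSpace.star_ofLp_dotProduct (x y : EuclideanSpace 𝕜 ι) :
    star (WithLp.ofLp x) ⬝ᵥ WithLp.ofLp y = ⟪x, y⟫_𝕜 := by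
  rw [EuclideanSpace.inner_eq_star_dotProduct, dotProduct_comm]

theorem EuclideanSpace.star_ofLp_dotProduct_mulVec (A : Matrix ι ι 𝕜) (x y : EuclideanSpace 𝕜 ι) :
    star (WithLp.ofLp x) ⬝ᵥ (A *ᵥ WithLp.ofLp y) = ⟪x, toEuclideanLin A y⟫_𝕜 :=
  star_ofLp_dotProduct x (toEuclideanLin A y)

end EuclideanMatrix

theorem Matrix.dotProduct_prod_eq_sum {R ι κ : Type*} [CommSemiring R] [Fintype ι] [Fintype κ]
    (u v : ι × κ → R) : u ⬝ᵥ v = ∑ j, (fun i => u (i, j)) ⬝ᵥ (fun i => v (i, j)) := by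
  simp only [dotProduct, Fintype.sum_prod_type]
  exact Finset.sum_comm

theorem Matrix.kronecker_one_mulVec_apply {R ι κ : Type*} [CommSemiring R] [Fintype ι]
    [Fintype κ] [DecidableEq κ] (A : Matrix ι ι R) (v : ι × κ → R) (i : ι) (j : κ) :
    ((A ⊗ₖ (1 : Matrix κ κ R)) *ᵥ v) (i, j) = (A *ᵥ fun i' => v (i', j)) i := by
  simp [mulVec, dotProduct, Fintype.sum_prod_type, one_apply]

theorem unitaryFidelity_le {n : ℕ} (U₁ U₂ : Matrix (Fin n) (Fin n) ℂ) {ψ : Fin n → ℂ}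
    (hψ : star ψ ⬝ᵥ ψ = 1) : unitaryFidelity n U₁ U₂ ≤ ‖star ψ ⬝ᵥ ((U₁ᴴ * U₂) *ᵥ ψ)‖ :=
  csInf_le ⟨0, by rintro _ ⟨_, -, rfl⟩; exact norm_nonneg _⟩ ⟨ψ, hψ, rfl⟩

/-- Attaching an ancilla does not decrease the fidelity:
`|⟨Φ, ((U₁†U₂) ⊗ I) Φ⟩| ≥ F(U₁, U₂)` for every unit vector `Φ` of the joint system. -/
theorem fidelity_le_ancilla_overlap (n m : ℕ) (U₁ U₂ : Matrix (Fin n) (Fin n) ℂ)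
    (hU₁ : U₁ ∈ Matrix.unitaryGroup (Fin n) ℂ) (hU₂ : U₂ ∈ Matrix.unitaryGroup (Fin n) ℂ)
    (Φ : Fin n × Fin m → ℂ) (hΦ : star Φ ⬝ᵥ Φ = 1) :
    unitaryFidelity n U₁ U₂ ≤
      ‖star Φ ⬝ᵥ (((U₁ᴴ * U₂) ⊗ₖ (1 : Matrix (Fin m) (Fin m) ℂ)) *ᵥ Φ)‖ := by
  set T := toEuclideanLin (U₁ᴴ * U₂)
  have hT : IsStarNormal T :=
    isStarNormal_toEuclideanLin (isStarNormal_of_mem_unitary (mul_mem (Unitary.star_mem hU₁) hU₂))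
  obtain ⟨b, μ, hb⟩ := LinearMap.exists_orthonormalBasis_eigenvectors_of_isStarNormal hT
  let φ (j : Fin m) : EuclideanSpace ℂ (Fin n) := WithLp.toLp 2 fun i => Φ (i, j)
  have hφ : ∑ j, ‖φ j‖ ^ 2 = 1 := by
    have h : ∑ j, ⟪φ j, φ j⟫_ℂ = 1 := by
      rw [← hΦ, dotProduct_prod_eq_sum]
      exact Finset.sum_congr rfl fun j _ => (EuclideanSpace.star_ofLp_dotProduct _ _).symm
    simpa only [map_sum, inner_self_eq_norm_sq, RCLike.one_re] using congrArg RCLike.re h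
  obtain ⟨ψ, hψ, hTψ⟩ := b.exists_inner_map_self_eq_sum hb φ hφ
  calc unitaryFidelity n U₁ U₂ ≤ ‖star ψ.ofLp ⬝ᵥ ((U₁ᴴ * U₂) *ᵥ ψ.ofLp)‖ :=
        unitaryFidelity_le U₁ U₂ (by simp [EuclideanSpace.star_ofLp_dotProduct, hψ])
    _ = _ := by
      rw [EuclideanSpace.star_ofLp_dotProduct_mulVec, hTψ, dotProduct_prod_eq_sum]
      simp only [kronecker_one_mulVec_apply]
      exact congrArg _ (Finset.sum_congr rfl fun j _ =>
        (EuclideanSpace.star_ofLp_dotProduct_mulVec _ (φ j) (φ j)).symm)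
end

section
/- (Lemma 2, telescoped.) Consider a T-query discrimination procedure for n×n unitaries U₁, U₂ with an m-dimensional ancilla, given by a unit vector φ₀ and unitaries W₀, …, W_T on ℂⁿ ⊗ ℂᵐ; let φᵢᵏ = W_k(Uᵢ ⊗ I)W_{k−1}(Uᵢ ⊗ I)⋯W₁(Uᵢ ⊗ I)W₀φ₀ for i = 1, 2 and 0 ≤ k ≤ T, and set D_k = 2·√(1 − |⟨φ₁ᵏ, φ₂ᵏ⟩|²). Then D₀ = 0 and D_T ≤ 2T·√(1 − F(U₁, U₂)²). -/
open Matrix Kronecker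

/-!
For unit vectors, `√(1 - |⟨a, c⟩|²)` is the sine of the Fubini–Study angle between the rays of
`a` and `c`, and it satisfies the triangle inequality. The unitaries `W_k` do not change it, and a
query replaces `⟨φ₁, φ₂⟩` by `⟨φ₁, (U₁†U₂ ⊗ I) φ₂⟩`, so by the triangle inequality through `φ₂` each
query increases it by at most `√(1 - |⟨φ₂, (U₁†U₂ ⊗ I) φ₂⟩|²)`. The ancilla does not help to
reduce `|⟨φ₂, (V ⊗ I) φ₂⟩|` below the fidelity: that number is a convex combination of points of
the numerical range of `V`, which is convex by the Toeplitz–Hausdorff theorem, so it is itself a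
point `⟨ψ, V ψ⟩` of the numerical range.
-/

open scoped InnerProductSpace
open WithLp (toLp ofLp)

theorem Real.sqrt_one_sub_sq_le_add {x y z : ℝ} (hx₀ : 0 ≤ x) (hx₁ : x ≤ 1) (hy₀ : 0 ≤ y)
    (hy₁ : y ≤ 1) (hz : x * y - √(1 - x ^ 2) * √(1 - y ^ 2) ≤ z) :
    √(1 - z ^ 2) ≤ √(1 - x ^ 2) + √(1 - y ^ 2) := by
  set s := √(1 - x ^ 2)
  set s' := √(1 - y ^ 2)
  have hs₀ : 0 ≤ s := Real.sqrt_nonneg _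
  have hs'₀ : 0 ≤ s' := Real.sqrt_nonneg _
  have hs : s ^ 2 = 1 - x ^ 2 := Real.sq_sqrt (by nlinarith)
  have hs' : s' ^ 2 = 1 - y ^ 2 := Real.sq_sqrt (by nlinarith)
  rcases le_or_gt 1 (s + s') with hsum | hsum
  · exact (Real.sqrt_le_one.mpr (by nlinarith)).trans hsum
  -- With `x = cos α`, `y = cos β`, now `α + β < π / 2` and `z ≥ cos (α + β)`.
  have hxy : s * s' ≤ x * y := by nlinarith
  calc √(1 - z ^ 2) ≤ √((x * s' + y * s) ^ 2) := Real.sqrt_le_sqrt (by nlinarith)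
    _ = x * s' + y * s := Real.sqrt_sq (by positivity)
    _ ≤ s + s' := by nlinarith [mul_le_of_le_one_left hs'₀ hx₁, mul_le_of_le_one_left hs₀ hy₁]

section InnerProductSpace

variable {𝕜 E : Type*} [RCLike 𝕜] [NormedAddCommGroup E] [InnerProductSpace 𝕜 E]

theorem inner_sub_inner_smul_sub_inner_smul {b : E} (hb : ‖b‖ = 1) (a c : E) :
    ⟪a - ⟪b, a⟫_𝕜 • b, c - ⟪b, c⟫_𝕜 • b⟫_𝕜 = ⟪a, c⟫_𝕜 - ⟪a, b⟫_𝕜 * ⟪b, c⟫_𝕜 := by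
  simp only [inner_sub_left, inner_sub_right, inner_smul_left, inner_smul_right,
    inner_self_eq_norm_sq_to_K, hb, inner_conj_symm, RCLike.ofReal_one]
  ring

theorem norm_sub_inner_smul_of_norm_eq_one {b x : E} (hb : ‖b‖ = 1) (hx : ‖x‖ = 1) :
    ‖x - ⟪b, x⟫_𝕜 • b‖ = √(1 - ‖⟪b, x⟫_𝕜‖ ^ 2) := by
  have hsq : (‖x - ⟪b, x⟫_𝕜 • b‖ : 𝕜) ^ 2 = 1 - (‖⟪b, x⟫_𝕜‖ : 𝕜) ^ 2 := by
    rw [← inner_self_eq_norm_sq_to_K, inner_sub_inner_smul_sub_inner_smul hb,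
      inner_self_eq_norm_sq_to_K, hx, ← inner_conj_symm, RCLike.conj_mul, RCLike.ofReal_one,
      one_pow]
  rw [← Real.sqrt_sq (norm_nonneg (x - _)), (by exact_mod_cast hsq : ‖x - ⟪b, x⟫_𝕜 • b‖ ^ 2 = _)]

theorem norm_inner_sub_inner_mul_inner_le {a b c : E} (ha : ‖a‖ = 1) (hb : ‖b‖ = 1)
    (hc : ‖c‖ = 1) :
    ‖⟪a, c⟫_𝕜 - ⟪a, b⟫_𝕜 * ⟪b, c⟫_𝕜‖ ≤ √(1 - ‖⟪a, b⟫_𝕜‖ ^ 2) * √(1 - ‖⟪b, c⟫_𝕜‖ ^ 2) := by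
  rw [← inner_sub_inner_smul_sub_inner_smul hb, norm_inner_symm a b,
    ← norm_sub_inner_smul_of_norm_eq_one hb ha, ← norm_sub_inner_smul_of_norm_eq_one hb hc]
  exact norm_inner_le_norm _ _

theorem norm_inner_le_one_of_norm_eq_one {a b : E} (ha : ‖a‖ = 1) (hb : ‖b‖ = 1) :
    ‖⟪a, b⟫_𝕜‖ ≤ 1 := by
  simpa [ha, hb] using norm_inner_le_norm (𝕜 := 𝕜) a b

theorem sqrt_one_sub_norm_inner_sq_le_add {a b c : E} (ha : ‖a‖ = 1) (hb : ‖b‖ = 1)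
    (hc : ‖c‖ = 1) :
    √(1 - ‖⟪a, c⟫_𝕜‖ ^ 2) ≤ √(1 - ‖⟪a, b⟫_𝕜‖ ^ 2) + √(1 - ‖⟪b, c⟫_𝕜‖ ^ 2) := by
  refine Real.sqrt_one_sub_sq_le_add (norm_nonneg _) (norm_inner_le_one_of_norm_eq_one ha hb)
    (norm_nonneg _) (norm_inner_le_one_of_norm_eq_one hb hc) ?_
  calc ‖⟪a, b⟫_𝕜‖ * ‖⟪b, c⟫_𝕜‖ - √(1 - ‖⟪a, b⟫_𝕜‖ ^ 2) * √(1 - ‖⟪b, c⟫_𝕜‖ ^ 2)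
      ≤ ‖⟪a, b⟫_𝕜 * ⟪b, c⟫_𝕜‖ - ‖⟪a, c⟫_𝕜 - ⟪a, b⟫_𝕜 * ⟪b, c⟫_𝕜‖ := by
        rw [norm_mul]
        linarith [norm_inner_sub_inner_mul_inner_le (𝕜 := 𝕜) ha hb hc]
    _ ≤ ‖⟪a, c⟫_𝕜‖ := by
        linarith [norm_sub_norm_le (⟪a, b⟫_𝕜 * ⟪b, c⟫_𝕜) ⟪a, c⟫_𝕜,
          norm_sub_rev (⟪a, b⟫_𝕜 * ⟪b, c⟫_𝕜) ⟪a, c⟫_𝕜]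

end InnerProductSpace

namespace LinearMap

variable {E : Type*} [NormedAddCommGroup E] [InnerProductSpace ℂ E]

def numericalRange (T : E →ₗ[ℂ] E) : Set ℂ :=
  {z | ∃ x, ‖x‖ = 1 ∧ ⟪x, T x⟫_ℂ = z}

theorem inner_map_self_div_mem_numericalRange (T : E →ₗ[ℂ] E) {x : E} (hx : x ≠ 0) :
    ⟪x, T x⟫_ℂ / (‖x‖ : ℂ) ^ 2 ∈ numericalRange T := by
  have hx' : (‖x‖ : ℂ) ≠ 0 := by exact_mod_cast norm_ne_zero_iff.mpr hx
  refine ⟨(‖x‖ : ℂ)⁻¹ • x, ?_, ?_⟩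
  · rw [norm_smul, norm_inv, Complex.norm_real, norm_norm, inv_mul_cancel₀ (by exact_mod_cast hx')]
  · rw [map_smul, inner_smul_left, inner_smul_right, map_inv₀, Complex.conj_ofReal]
    field_simp

theorem inner_smul_map_smul_of_norm_eq_one (T : E →ₗ[ℂ] E) {ε : ℂ} (hε : ‖ε‖ = 1) (x : E) :
    ⟪ε • x, T (ε • x)⟫_ℂ = ⟪x, T x⟫_ℂ := by
  rw [map_smul, inner_smul_left, inner_smul_right, ← mul_assoc, Complex.conj_mul', hε]
  simp

theorem exists_norm_eq_one_im_inner_add_eq_zero (T : E →ₗ[ℂ] E) (a b : E) :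
    ∃ ε : ℂ, ‖ε‖ = 1 ∧ (⟪ε • a, T b⟫_ℂ + ⟪b, T (ε • a)⟫_ℂ).im = 0 := by
  set d := ⟪a, T b⟫_ℂ - (starRingEnd ℂ) ⟪b, T a⟫_ℂ
  set ε := Complex.exp (d.arg * Complex.I)
  have hε : ‖ε‖ = 1 := Complex.norm_exp_ofReal_mul_I _
  have hd : (starRingEnd ℂ) ε * d = ‖d‖ := by
    conv_lhs => rw [← Complex.norm_mul_exp_arg_mul_I d]
    rw [mul_left_comm, Complex.conj_mul', hε]
    simp
  refine ⟨ε, hε, ?_⟩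
  -- The imaginary part in question is that of `conj ε * d`.
  rw [map_smul, inner_smul_left, inner_smul_right]
  have him := congrArg Complex.im hd
  simp only [d, Complex.ofReal_im, Complex.mul_im, Complex.sub_re, Complex.sub_im,
    Complex.conj_re, Complex.conj_im] at him
  simp only [Complex.add_im, Complex.mul_im, Complex.conj_re, Complex.conj_im]
  linarith

theorem ofReal_mem_numericalRange {T : E →ₗ[ℂ] E} {a b : E} (ha : ‖a‖ = 1)
    (hb : ‖b‖ = 1) (hTa : ⟪a, T a⟫_ℂ = 1) (hTb : ⟪b, T b⟫_ℂ = 0)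
    (hγ : (⟪a, T b⟫_ℂ + ⟪b, T a⟫_ℂ).im = 0) {t : ℝ} (ht : t ∈ Set.Icc (0 : ℝ) 1) :
    (t : ℂ) ∈ numericalRange T := by
  -- Along the segment from `b` to `a` the Rayleigh quotient of `T` is real, `0` at `b` and
  -- `1` at `a`; conclude by the intermediate value theorem.
  set γ := ⟪a, T b⟫_ℂ + ⟪b, T a⟫_ℂ
  set v : ℝ → E := fun u => (u : ℂ) • a + ((1 - u : ℝ) : ℂ) • b
  have hv : ∀ u, ⟪v u, T (v u)⟫_ℂ = ((u ^ 2 + u * (1 - u) * γ.re : ℝ) : ℂ) := by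
    intro u
    have hγ' : γ = (γ.re : ℂ) := Complex.ext rfl (by simp [hγ])
    simp only [v, map_add, map_smul, inner_add_left, inner_add_right, inner_smul_left,
      inner_smul_right, hTa, hTb, Complex.conj_ofReal]
    push_cast
    linear_combination (↑u * (1 - ↑u)) * hγ'
  have hv₀ : ∀ u, v u ≠ 0 := by
    intro u hu
    have hu' : (u : ℂ) • a = -(((1 - u : ℝ) : ℂ) • b) := eq_neg_of_add_eq_zero_left hu
    have hu₀ : u = 0 := by
      have := congrArg (fun w => ⟪w, T w⟫_ℂ) hu'
      simp only [map_neg, map_smul, inner_neg_left, inner_neg_right, inner_smul_left,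
        inner_smul_right, hTa, hTb, Complex.conj_ofReal] at this
      have hsq : (u : ℂ) ^ 2 = 0 := by linear_combination this
      exact_mod_cast pow_eq_zero_iff two_ne_zero |>.mp hsq
    simp [v, hu₀] at hu
    simp [hu] at hb
  set f : ℝ → ℝ := fun u => (u ^ 2 + u * (1 - u) * γ.re) / ‖v u‖ ^ 2
  have hf : Continuous f :=
    Continuous.div (by fun_prop) (by fun_prop) fun u => pow_ne_zero _ (norm_ne_zero_iff.mpr (hv₀ u))
  obtain ⟨u, -, hu⟩ : t ∈ f '' Set.Icc 0 1 := by
    refine intermediate_value_Icc zero_le_one hf.continuousOn ?_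
    simpa [f, v, ha] using ht
  rw [← hu]
  convert inner_map_self_div_mem_numericalRange T (hv₀ u) using 1
  rw [hv u]
  push_cast [f]
  rfl

theorem convex_numericalRange (T : E →ₗ[ℂ] E) : Convex ℝ (numericalRange T) := by
  rintro _ ⟨a, ha, rfl⟩ _ ⟨b, hb, rfl⟩ s t hs ht hst
  rcases eq_or_ne ⟪a, T a⟫_ℂ ⟪b, T b⟫_ℂ with h | h
  · refine ⟨a, ha, ?_⟩
    rw [← h, ← add_smul, hst, one_smul]
  -- Normalize so that the two endpoints become `1` and `0`.
  set M := (⟪a, T a⟫_ℂ - ⟪b, T b⟫_ℂ)⁻¹ • (T - ⟪b, T b⟫_ℂ • LinearMap.id)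
  have hM : ∀ x, ‖x‖ = 1 →
      ⟪x, M x⟫_ℂ = (⟪a, T a⟫_ℂ - ⟪b, T b⟫_ℂ)⁻¹ * (⟪x, T x⟫_ℂ - ⟪b, T b⟫_ℂ) := by
    intro x hx
    simp [M, inner_self_eq_norm_sq_to_K, hx]
  obtain ⟨ε, hε, hγ⟩ := exists_norm_eq_one_im_inner_add_eq_zero M a b
  obtain ⟨x, hx, hxs⟩ := ofReal_mem_numericalRange (T := M)
    (by rw [norm_smul, hε, ha, one_mul]) hb
    (by rw [inner_smul_map_smul_of_norm_eq_one M hε, hM a ha, inv_mul_cancel₀ (sub_ne_zero.mpr h)])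
    (by rw [hM b hb, sub_self, mul_zero]) hγ ⟨hs, by linarith⟩
  refine ⟨x, hx, ?_⟩
  rw [hM x hx, inv_mul_eq_iff_eq_mul₀ (sub_ne_zero.mpr h)] at hxs
  rw [Complex.real_smul, Complex.real_smul, show t = 1 - s by linarith]
  push_cast
  linear_combination hxs

theorem sum_inner_map_self_mem_numericalRange (T : E →ₗ[ℂ] E) {ι : Type*} [Fintype ι]
    (x : ι → E) (hx : ∑ i, ‖x i‖ ^ 2 = 1) : ∑ i, ⟪x i, T (x i)⟫_ℂ ∈ numericalRange T := by
  have hsmul : ∀ i, ⟪x i, T (x i)⟫_ℂ = ‖x i‖ ^ 2 • (⟪x i, T (x i)⟫_ℂ / (‖x i‖ : ℂ) ^ 2) := by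
    intro i
    rcases eq_or_ne (x i) 0 with h | h
    · rw [h]
      simp
    · rw [Complex.real_smul, Complex.ofReal_pow, mul_div_cancel₀]
      exact pow_ne_zero _ (by exact_mod_cast norm_ne_zero_iff.mpr h)
  rw [Finset.sum_congr rfl fun i _ => hsmul i, ← finsum_eq_sum_of_fintype]
  refine (convex_numericalRange T).finsum_mem (fun i => by positivity)
    (by rwa [finsum_eq_sum_of_fintype]) fun i hi => ?_
  exact inner_map_self_div_mem_numericalRange T (by simpa using hi)

end LinearMap

namespace Matrix

section DotProduct

variable {ι : Type*} [Fintype ι]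

theorem star_dotProduct_eq_inner (x y : ι → ℂ) : star x ⬝ᵥ y = ⟪toLp 2 x, toLp 2 y⟫_ℂ := by
  rw [EuclideanSpace.inner_toLp_toLp, dotProduct_comm]

theorem star_dotProduct_self_eq_norm_sq (x : ι → ℂ) : star x ⬝ᵥ x = (‖toLp 2 x‖ : ℂ) ^ 2 := by
  rw [star_dotProduct_eq_inner, inner_self_eq_norm_sq_to_K]
  rfl

theorem norm_toLp_eq_one_iff (x : ι → ℂ) : ‖toLp 2 x‖ = 1 ↔ star x ⬝ᵥ x = 1 := by
  rw [star_dotProduct_self_eq_norm_sq, ← pow_eq_one_iff_of_nonneg (norm_nonneg _) two_ne_zero]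
  norm_cast

end DotProduct

variable {R n m : Type*} [Fintype n] [Fintype m] [DecidableEq m]

theorem star_mulVec_dotProduct_mulVec [CommSemiring R] [StarRing R] (A B : Matrix n n R)
    (x y : n → R) : star (A *ᵥ x) ⬝ᵥ (B *ᵥ y) = star x ⬝ᵥ ((Aᴴ * B) *ᵥ y) := by
  rw [star_mulVec, dotProduct_mulVec, vecMul_vecMul, ← dotProduct_mulVec]

theorem star_mulVec_dotProduct_mulVec_of_mem_unitaryGroup [CommRing R] [StarRing R]
    [DecidableEq n] {W : Matrix n n R} (hW : W ∈ unitaryGroup n R) (x y : n → R) :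
    star (W *ᵥ x) ⬝ᵥ (W *ᵥ y) = star x ⬝ᵥ y := by
  rw [star_mulVec_dotProduct_mulVec, ← star_eq_conjTranspose, mem_unitaryGroup_iff'.mp hW,
    one_mulVec]

theorem kronecker_one_conjTranspose_mul [CommSemiring R] [StarRing R] (A B : Matrix n n R) :
    (A ⊗ₖ (1 : Matrix m m R))ᴴ * (B ⊗ₖ (1 : Matrix m m R)) = (Aᴴ * B) ⊗ₖ (1 : Matrix m m R) := by
  rw [conjTranspose_kronecker, conjTranspose_one, ← mul_kronecker_mul, one_mul]

theorem kronecker_one_mem_unitaryGroup [CommRing R] [StarRing R] [DecidableEq n]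
    {U : Matrix n n R} (hU : U ∈ unitaryGroup n R) :
    U ⊗ₖ (1 : Matrix m m R) ∈ unitaryGroup (n × m) R :=
  kronecker_mem_unitary hU (one_mem _)

theorem star_dotProduct_kronecker_one_mulVec [CommSemiring R] [StarRing R] (V : Matrix n n R)
    (φ : n × m → R) :
    star φ ⬝ᵥ ((V ⊗ₖ (1 : Matrix m m R)) *ᵥ φ) =
      ∑ j, star (fun i => φ (i, j)) ⬝ᵥ (V *ᵥ fun i => φ (i, j)) := by
  simp only [dotProduct, mulVec, Fintype.sum_prod_type, kroneckerMap_apply, Pi.star_apply,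
    one_apply, mul_ite, mul_one, mul_zero, ite_mul, zero_mul, Finset.sum_ite_eq,
    Finset.mem_univ, if_true]
  exact Finset.sum_comm

theorem star_dotProduct_kronecker_one_mulVec_mem_numericalRange [DecidableEq n]
    (V : Matrix n n ℂ) {φ : n × m → ℂ} (hφ : star φ ⬝ᵥ φ = 1) :
    star φ ⬝ᵥ ((V ⊗ₖ (1 : Matrix m m ℂ)) *ᵥ φ) ∈ (toLpLin 2 2 V).numericalRange := by
  set c : m → EuclideanSpace ℂ n := fun j => toLp 2 fun i => φ (i, j)
  have hc : ∑ j, ‖c j‖ ^ 2 = 1 := by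
    have := star_dotProduct_kronecker_one_mulVec 1 φ
    rw [one_kronecker_one, one_mulVec, hφ] at this
    simp only [one_mulVec, star_dotProduct_self_eq_norm_sq] at this
    exact_mod_cast this.symm
  rw [star_dotProduct_kronecker_one_mulVec]
  simp only [star_dotProduct_eq_inner]
  exact LinearMap.sum_inner_map_self_mem_numericalRange _ c hc

end Matrix

theorem unitaryFidelity_nonneg (n : ℕ) (U₁ U₂ : Matrix (Fin n) (Fin n) ℂ) :
    0 ≤ unitaryFidelity n U₁ U₂ :=
  Real.sInf_nonneg fun _ ⟨_, _, hr⟩ => hr ▸ norm_nonneg _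

theorem unitaryFidelity_le_norm {n : ℕ} {U₁ U₂ : Matrix (Fin n) (Fin n) ℂ} {z : ℂ}
    (hz : z ∈ (toLpLin 2 2 (U₁ᴴ * U₂)).numericalRange) : unitaryFidelity n U₁ U₂ ≤ ‖z‖ := by
  obtain ⟨x, hx, rfl⟩ := hz
  refine csInf_le ⟨0, fun _ ⟨_, _, hr⟩ => hr ▸ norm_nonneg _⟩ ⟨ofLp x, ?_, ?_⟩
  · rwa [← norm_toLp_eq_one_iff]
  · rw [star_dotProduct_eq_inner]
    rfl

theorem sqrt_one_sub_norm_sq_query_le {n : ℕ} {m : Type*} [Fintype m] [DecidableEq m]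
    {U₁ U₂ : Matrix (Fin n) (Fin n) ℂ} (hU₁ : U₁ ∈ unitaryGroup (Fin n) ℂ)
    (hU₂ : U₂ ∈ unitaryGroup (Fin n) ℂ) {x y : Fin n × m → ℂ} (hx : star x ⬝ᵥ x = 1)
    (hy : star y ⬝ᵥ y = 1) :
    √(1 - ‖star ((U₁ ⊗ₖ (1 : Matrix m m ℂ)) *ᵥ x) ⬝ᵥ ((U₂ ⊗ₖ (1 : Matrix m m ℂ)) *ᵥ y)‖ ^ 2) ≤
      √(1 - ‖star x ⬝ᵥ y‖ ^ 2) + √(1 - unitaryFidelity n U₁ U₂ ^ 2) := by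
  set V := U₁ᴴ * U₂
  have hV : V ⊗ₖ (1 : Matrix m m ℂ) ∈ unitaryGroup (Fin n × m) ℂ :=
    kronecker_one_mem_unitaryGroup (mul_mem (star_eq_conjTranspose U₁ ▸ Unitary.star_mem hU₁) hU₂)
  set c := (V ⊗ₖ (1 : Matrix m m ℂ)) *ᵥ y
  have hc : star c ⬝ᵥ c = 1 := by rw [star_mulVec_dotProduct_mulVec_of_mem_unitaryGroup hV, hy]
  have hF : unitaryFidelity n U₁ U₂ ≤ ‖star y ⬝ᵥ c‖ :=
    unitaryFidelity_le_norm (star_dotProduct_kronecker_one_mulVec_mem_numericalRange V hy)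
  rw [star_mulVec_dotProduct_mulVec, kronecker_one_conjTranspose_mul]
  calc _ ≤ √(1 - ‖star x ⬝ᵥ y‖ ^ 2) + √(1 - ‖star y ⬝ᵥ c‖ ^ 2) := by
        simp only [star_dotProduct_eq_inner]
        exact sqrt_one_sub_norm_inner_sq_le_add ((norm_toLp_eq_one_iff x).mpr hx)
          ((norm_toLp_eq_one_iff y).mpr hy) ((norm_toLp_eq_one_iff c).mpr hc)
    _ ≤ _ := by gcongr; exact unitaryFidelity_nonneg n U₁ U₂

/-- Lemma 2, telescoped: in a `T`-query discrimination procedure the trace distance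
`D_k = 2√(1 - |⟨φ₁ᵏ, φ₂ᵏ⟩|²)` satisfies `D₀ = 0` and `D_T ≤ 2T√(1 - F(U₁,U₂)²)`. -/
theorem traceDist_telescoped (n m T : ℕ) (U₁ U₂ : Matrix (Fin n) (Fin n) ℂ)
    (hU₁ : U₁ ∈ Matrix.unitaryGroup (Fin n) ℂ) (hU₂ : U₂ ∈ Matrix.unitaryGroup (Fin n) ℂ)
    (φ₀ : Fin n × Fin m → ℂ) (hφ₀ : star φ₀ ⬝ᵥ φ₀ = 1)
    (W : ℕ → Matrix (Fin n × Fin m) (Fin n × Fin m) ℂ)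
    (hW : ∀ k ≤ T, W k ∈ Matrix.unitaryGroup (Fin n × Fin m) ℂ)
    (ψ₁ ψ₂ : ℕ → (Fin n × Fin m → ℂ))
    (hψ₁0 : ψ₁ 0 = W 0 *ᵥ φ₀) (hψ₂0 : ψ₂ 0 = W 0 *ᵥ φ₀)
    (hψ₁s : ∀ k < T, ψ₁ (k + 1) =
      W (k + 1) *ᵥ ((U₁ ⊗ₖ (1 : Matrix (Fin m) (Fin m) ℂ)) *ᵥ ψ₁ k))
    (hψ₂s : ∀ k < T, ψ₂ (k + 1) =
      W (k + 1) *ᵥ ((U₂ ⊗ₖ (1 : Matrix (Fin m) (Fin m) ℂ)) *ᵥ ψ₂ k))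
    (D : ℕ → ℝ)
    (hD : ∀ k, D k = 2 * Real.sqrt (1 - ‖star (ψ₁ k) ⬝ᵥ ψ₂ k‖ ^ 2)) :
    D 0 = 0 ∧ D T ≤ 2 * T * Real.sqrt (1 - unitaryFidelity n U₁ U₂ ^ 2) := by
  have hW₀ := star_mulVec_dotProduct_mulVec_of_mem_unitaryGroup (hW 0 T.zero_le)
  have hstart : star (ψ₁ 0) ⬝ᵥ ψ₂ 0 = 1 := by rw [hψ₁0, hψ₂0, hW₀, hφ₀]
  have hunit : ∀ k ≤ T, star (ψ₁ k) ⬝ᵥ ψ₁ k = 1 ∧ star (ψ₂ k) ⬝ᵥ ψ₂ k = 1 := by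
    intro k hk
    induction k with
    | zero => rw [hψ₁0, hψ₂0, hW₀, hφ₀]; exact ⟨rfl, rfl⟩
    | succ k ih =>
      rw [hψ₁s k hk, hψ₂s k hk, star_mulVec_dotProduct_mulVec_of_mem_unitaryGroup (hW _ hk),
        star_mulVec_dotProduct_mulVec_of_mem_unitaryGroup (hW _ hk),
        star_mulVec_dotProduct_mulVec_of_mem_unitaryGroup (kronecker_one_mem_unitaryGroup hU₁),
        star_mulVec_dotProduct_mulVec_of_mem_unitaryGroup (kronecker_one_mem_unitaryGroup hU₂)]
      exact ih (by omega)
  have hbound : ∀ k ≤ T, √(1 - ‖star (ψ₁ k) ⬝ᵥ ψ₂ k‖ ^ 2) ≤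
      k * √(1 - unitaryFidelity n U₁ U₂ ^ 2) := by
    intro k hk
    induction k with
    | zero => simp [hstart]
    | succ k ih =>
      obtain ⟨h₁, h₂⟩ := hunit k (by omega)
      rw [hψ₁s k hk, hψ₂s k hk, star_mulVec_dotProduct_mulVec_of_mem_unitaryGroup (hW _ hk)]
      push_cast
      linarith [sqrt_one_sub_norm_sq_query_le hU₁ hU₂ h₁ h₂, ih (by omega)]
  refine ⟨by simp [hD, hstart], ?_⟩
  rw [hD]
  linarith [hbound T le_rfl]
end

section
/- (Lemma 3(i).) Let Φ₁, Φ₂ be unit vectors in ℂᵈ, let ε ∈ [0, 1/2], and suppose there is a two-outcome POVM (Π₁, Π₂) with ⟨Φ₁, Π₁Φ₁⟩ ≥ 1 − ε and ⟨Φ₂, Π₂Φ₂⟩ ≥ 1 − ε. Then 2·√(1 − |⟨Φ₁, Φ₂⟩|²) ≥ 2·√(1 − 4ε(1 − ε)); that is, the trace distance between the pure states Φ₁ and Φ₂ is at least 2·√(1 − 4ε(1 − ε)). -/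
open Matrix ComplexOrder

/-!
Split `⟨Φ₁, Φ₂⟩ = ⟨Φ₁, Π₁Φ₂⟩ + ⟨Φ₁, Π₂Φ₂⟩` and apply Cauchy–Schwarz to the semi-inner products
given by `Π₁` and `Π₂`: the overlap is at most `√a √b + √(1 - a) √(1 - b)` with
`a = ⟨Φ₁, Π₁Φ₁⟩ ≥ 1 - ε` and `b = ⟨Φ₂, Π₁Φ₂⟩ ≤ ε`. By the Brahmagupta–Fibonacci identity the square
of this bound is `1 - (√a √(1 - b) - √(1 - a) √b)²`, and the subtracted square is at least
`(1 - 2ε)² = 1 - 4ε(1 - ε)`.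
-/

theorem Matrix.PosSemidef.norm_dotProduct_mulVec_le {𝕜 n : Type*} [RCLike 𝕜] [Fintype n]
    {P : Matrix n n 𝕜} (hP : P.PosSemidef) (x y : n → 𝕜) :
    ‖star x ⬝ᵥ (P *ᵥ y)‖ ≤
      √(RCLike.re (star x ⬝ᵥ (P *ᵥ x))) * √(RCLike.re (star y ⬝ᵥ (P *ᵥ y))) := by
  let := P.toSeminormedAddCommGroup hP
  let := P.toInnerProductSpace hP
  have h := norm_inner_le_norm (𝕜 := 𝕜) x y
  -- the inner product induced by `P` is `⟪x, y⟫ = (P *ᵥ y) ⬝ᵥ star x`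
  simp only [dotProduct_comm (star _)]
  exact h

theorem Matrix.dotProduct_mulVec_add_dotProduct_mulVec_of_add_eq_one {R n : Type*}
    [CommSemiring R] [Fintype n] [DecidableEq n] {P₁ P₂ : Matrix n n R} (hsum : P₁ + P₂ = 1)
    (x y : n → R) :
    x ⬝ᵥ (P₁ *ᵥ y) + x ⬝ᵥ (P₂ *ᵥ y) = x ⬝ᵥ y := by
  rw [← dotProduct_add, ← add_mulVec, hsum, one_mulVec]

theorem Matrix.PosSemidef.norm_dotProduct_le_of_add_eq_one {𝕜 n : Type*} [RCLike 𝕜] [Fintype n]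
    [DecidableEq n] {P₁ P₂ : Matrix n n 𝕜} (hP₁ : P₁.PosSemidef) (hP₂ : P₂.PosSemidef)
    (hsum : P₁ + P₂ = 1) (x y : n → 𝕜) :
    ‖star x ⬝ᵥ y‖ ≤
      √(RCLike.re (star x ⬝ᵥ (P₁ *ᵥ x))) * √(RCLike.re (star y ⬝ᵥ (P₁ *ᵥ y))) +
      √(RCLike.re (star x ⬝ᵥ (P₂ *ᵥ x))) * √(RCLike.re (star y ⬝ᵥ (P₂ *ᵥ y))) := by
  rw [← dotProduct_mulVec_add_dotProduct_mulVec_of_add_eq_one hsum]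
  exact (norm_add_le _ _).trans
    (add_le_add (hP₁.norm_dotProduct_mulVec_le x y) (hP₂.norm_dotProduct_mulVec_le x y))

theorem sqrt_mul_sqrt_add_sqrt_mul_sqrt_sq_le {a a' b b' ε : ℝ} (ha' : 0 ≤ a') (hb : 0 ≤ b)
    (ha : a + a' = 1) (hb' : b + b' = 1) (hεa : 1 - ε ≤ a) (hεb' : 1 - ε ≤ b') (hε : ε ≤ 1 / 2) :
    (√a * √b + √a' * √b') ^ 2 ≤ 4 * ε * (1 - ε) := by
  have hpythag : (√a * √b' - √a' * √b) ^ 2 + (√a * √b + √a' * √b') ^ 2 = 1 := by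
    rw [← sq_add_sq_mul_sq_add_sq, Real.sq_sqrt ha', Real.sq_sqrt hb, Real.sq_sqrt (by linarith),
      Real.sq_sqrt (by linarith), ha, add_comm, hb', one_mul]
  have hgap : 1 - 2 * ε ≤ √a * √b' - √a' * √b := by
    have hlarge : √(1 - ε) * √(1 - ε) ≤ √a * √b' := by gcongr
    have hsmall : √a' * √b ≤ √ε * √ε := by gcongr <;> linarith
    rw [Real.mul_self_sqrt (by linarith)] at hlarge
    rw [Real.mul_self_sqrt (by linarith)] at hsmall
    linarith
  nlinarith

/-- Lemma 3(i): if two states can be discriminated with bounded error `ε` by a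
two-outcome POVM, then their trace distance is at least `2√(1 - 4ε(1-ε))`. -/
theorem traceDist_ge_of_bounded_error_povm (d : ℕ) (Φ₁ Φ₂ : Fin d → ℂ)
    (hΦ₁ : star Φ₁ ⬝ᵥ Φ₁ = 1) (hΦ₂ : star Φ₂ ⬝ᵥ Φ₂ = 1)
    (ε : ℝ) (hε : ε ∈ Set.Icc (0 : ℝ) (1/2))
    (P₁ P₂ : Matrix (Fin d) (Fin d) ℂ)
    (hP₁ : P₁.PosSemidef) (hP₂ : P₂.PosSemidef) (hsum : P₁ + P₂ = 1)
    (hm₁ : ((1 - ε : ℝ) : ℂ) ≤ star Φ₁ ⬝ᵥ (P₁ *ᵥ Φ₁))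
    (hm₂ : ((1 - ε : ℝ) : ℂ) ≤ star Φ₂ ⬝ᵥ (P₂ *ᵥ Φ₂)) :
    2 * Real.sqrt (1 - 4 * ε * (1 - ε)) ≤
      2 * Real.sqrt (1 - ‖star Φ₁ ⬝ᵥ Φ₂‖ ^ 2) := by
  have hsplit (x : Fin d → ℂ) (hx : star x ⬝ᵥ x = 1) :
      (star x ⬝ᵥ (P₁ *ᵥ x)).re + (star x ⬝ᵥ (P₂ *ᵥ x)).re = 1 := by
    simpa [hx] using congrArg Complex.re
      (dotProduct_mulVec_add_dotProduct_mulVec_of_add_eq_one hsum (star x) x)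
  have hoverlap := hP₁.norm_dotProduct_le_of_add_eq_one hP₂ hsum Φ₁ Φ₂
  have hbound := sqrt_mul_sqrt_add_sqrt_mul_sqrt_sq_le (hP₂.re_dotProduct_nonneg Φ₁)
    (hP₁.re_dotProduct_nonneg Φ₂) (hsplit Φ₁ hΦ₁) (hsplit Φ₂ hΦ₂) (Complex.le_def.mp hm₁).1
    (Complex.le_def.mp hm₂).1 hε.2
  gcongr
  exact (pow_le_pow_left₀ (norm_nonneg _) hoverlap 2).trans hbound
end

section
/- (Lemma 3(ii).) Let Φ₁, Φ₂ be unit vectors in ℂᵈ, let ε ∈ [0, 1], and suppose there is a three-outcome POVM (Π₀, Π₁, Π₂) with ⟨Φ₂, Π₁Φ₂⟩ = ⟨Φ₁, Π₂Φ₁⟩ = 0 and ⟨Φᵢ, Π₀Φᵢ⟩ ≤ ε for i = 1, 2. Then 2·√(1 − |⟨Φ₁, Φ₂⟩|²) ≥ 2·√(1 − ε²); that is, the trace distance between the pure states Φ₁ and Φ₂ is at least 2·√(1 − ε²). -/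
/-!
Outcomes 1 and 2 never fire on `Φ₂` resp. `Φ₁`, and a positive semidefinite matrix kills every
vector on which its quadratic form vanishes, so `Π₁ Φ₂ = 0` and `Π₂ Φ₁ = 0`. Hence
`⟨Φ₁, Φ₂⟩ = ⟨Φ₁, Π₀ Φ₂⟩`, and Cauchy–Schwarz for the semi-inner product defined by `Π₀` bounds
its modulus by `√(ε ε) = ε`.
-/

open Matrix ComplexOrder
open scoped InnerProductSpace

namespace Matrix.PosSemidef

variable {𝕜 n : Type*} [RCLike 𝕜] [Fintype n] {P : Matrix n n 𝕜}

open scoped MatrixOrder in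
theorem norm_dotProduct_mulVec_le_s7 (hP : P.PosSemidef) (x y : n → 𝕜) :
    ‖star x ⬝ᵥ (P *ᵥ y)‖ ≤
      √(RCLike.re (star x ⬝ᵥ (P *ᵥ x))) * √(RCLike.re (star y ⬝ᵥ (P *ᵥ y))) := by
  classical
  -- Writing `P = Sᴴ S` turns `xᴴ P y` into the Euclidean inner product of `S x` and `S y`.
  obtain ⟨S, rfl⟩ := CStarAlgebra.nonneg_iff_eq_star_mul_self.mp hP.nonneg
  have hform (a b : n → 𝕜) :
      star a ⬝ᵥ ((star S * S) *ᵥ b) = ⟪WithLp.toLp 2 (S *ᵥ a), WithLp.toLp 2 (S *ᵥ b)⟫_𝕜 := by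
    rw [EuclideanSpace.inner_toLp_toLp, dotProduct_comm, star_eq_conjTranspose, ← mulVec_mulVec,
      star_mulVec, dotProduct_comm, dotProduct_mulVec, dotProduct_comm]
  simp only [hform, inner_self_eq_norm_sq, Real.sqrt_sq (norm_nonneg _)]
  exact norm_inner_le_norm _ _

theorem norm_dotProduct_mulVec_le_of_re_le (hP : P.PosSemidef) {x y : n → 𝕜} {ε : ℝ}
    (hx : RCLike.re (star x ⬝ᵥ (P *ᵥ x)) ≤ ε) (hy : RCLike.re (star y ⬝ᵥ (P *ᵥ y)) ≤ ε) :
    ‖star x ⬝ᵥ (P *ᵥ y)‖ ≤ ε := by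
  have hε : 0 ≤ ε := (hP.re_dotProduct_nonneg x).trans hx
  calc ‖star x ⬝ᵥ (P *ᵥ y)‖
      ≤ √(RCLike.re (star x ⬝ᵥ (P *ᵥ x))) * √(RCLike.re (star y ⬝ᵥ (P *ᵥ y))) :=
        hP.norm_dotProduct_mulVec_le_s7 x y
    _ ≤ √ε * √ε := by gcongr
    _ = ε := Real.mul_self_sqrt hε

theorem dotProduct_mulVec_eq_zero_of_right (hP : P.PosSemidef) (x : n → 𝕜) {y : n → 𝕜}
    (hy : star y ⬝ᵥ (P *ᵥ y) = 0) : star x ⬝ᵥ (P *ᵥ y) = 0 := by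
  rw [(hP.dotProduct_mulVec_zero_iff y).mp hy, dotProduct_zero]

theorem dotProduct_mulVec_eq_zero_of_left (hP : P.PosSemidef) {x : n → 𝕜} (y : n → 𝕜)
    (hx : star x ⬝ᵥ (P *ᵥ x) = 0) : star x ⬝ᵥ (P *ᵥ y) = 0 := by
  rw [dotProduct_mulVec, ← hP.isHermitian.eq, ← star_mulVec,
    (hP.dotProduct_mulVec_zero_iff x).mp hx, star_zero, zero_dotProduct]

end Matrix.PosSemidef

section

variable {𝕜 n : Type*} [RCLike 𝕜] [Fintype n] [DecidableEq n]

theorem norm_dotProduct_le_of_one_sided_error {P₀ P₁ P₂ : Matrix n n 𝕜}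
    (hP₀ : P₀.PosSemidef) (hP₁ : P₁.PosSemidef) (hP₂ : P₂.PosSemidef) (hsum : P₀ + P₁ + P₂ = 1)
    {x y : n → 𝕜} {ε : ℝ} (hx₂ : star x ⬝ᵥ (P₂ *ᵥ x) = 0) (hy₁ : star y ⬝ᵥ (P₁ *ᵥ y) = 0)
    (hx₀ : RCLike.re (star x ⬝ᵥ (P₀ *ᵥ x)) ≤ ε) (hy₀ : RCLike.re (star y ⬝ᵥ (P₀ *ᵥ y)) ≤ ε) :
    ‖star x ⬝ᵥ y‖ ≤ ε := by
  have hdec : star x ⬝ᵥ y = star x ⬝ᵥ (P₀ *ᵥ y) := by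
    conv_lhs => rw [← one_mulVec y, ← hsum]
    rw [add_mulVec, add_mulVec, dotProduct_add, dotProduct_add,
      hP₁.dotProduct_mulVec_eq_zero_of_right x hy₁, hP₂.dotProduct_mulVec_eq_zero_of_left y hx₂,
      add_zero, add_zero]
  rw [hdec]
  exact hP₀.norm_dotProduct_mulVec_le_of_re_le hx₀ hy₀

end

theorem traceDist_ge_of_one_sided_error_povm_general (d : ℕ) (Φ₁ Φ₂ : Fin d → ℂ)
    (ε : ℝ)
    (P₀ P₁ P₂ : Matrix (Fin d) (Fin d) ℂ)
    (hP₀ : P₀.PosSemidef) (hP₁ : P₁.PosSemidef) (hP₂ : P₂.PosSemidef)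
    (hsum : P₀ + P₁ + P₂ = 1)
    (he₁ : star Φ₂ ⬝ᵥ (P₁ *ᵥ Φ₂) = 0) (he₂ : star Φ₁ ⬝ᵥ (P₂ *ᵥ Φ₁) = 0)
    (hi₁ : star Φ₁ ⬝ᵥ (P₀ *ᵥ Φ₁) ≤ ((ε : ℝ) : ℂ))
    (hi₂ : star Φ₂ ⬝ᵥ (P₀ *ᵥ Φ₂) ≤ ((ε : ℝ) : ℂ)) :
    2 * Real.sqrt (1 - ε ^ 2) ≤
      2 * Real.sqrt (1 - ‖star Φ₁ ⬝ᵥ Φ₂‖ ^ 2) := by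
  have hre {z : ℂ} (hz : z ≤ (ε : ℂ)) : z.re ≤ ε := by simpa using (Complex.le_def.mp hz).1
  have hnorm : ‖star Φ₁ ⬝ᵥ Φ₂‖ ≤ ε :=
    norm_dotProduct_le_of_one_sided_error hP₀ hP₁ hP₂ hsum he₂ he₁ (hre hi₁) (hre hi₂)
  gcongr

/-- Lemma 3(ii): if two states can be discriminated with one-sided error `ε` by a
three-outcome POVM, then their trace distance is at least `2√(1 - ε²)`. -/
theorem traceDist_ge_of_one_sided_error_povm (d : ℕ) (Φ₁ Φ₂ : Fin d → ℂ)
    (hΦ₁ : star Φ₁ ⬝ᵥ Φ₁ = 1) (hΦ₂ : star Φ₂ ⬝ᵥ Φ₂ = 1)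
    (ε : ℝ) (hε : ε ∈ Set.Icc (0 : ℝ) 1)
    (P₀ P₁ P₂ : Matrix (Fin d) (Fin d) ℂ)
    (hP₀ : P₀.PosSemidef) (hP₁ : P₁.PosSemidef) (hP₂ : P₂.PosSemidef)
    (hsum : P₀ + P₁ + P₂ = 1)
    (he₁ : star Φ₂ ⬝ᵥ (P₁ *ᵥ Φ₂) = 0) (he₂ : star Φ₁ ⬝ᵥ (P₂ *ᵥ Φ₁) = 0)
    (hi₁ : star Φ₁ ⬝ᵥ (P₀ *ᵥ Φ₁) ≤ ((ε : ℝ) : ℂ))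
    (hi₂ : star Φ₂ ⬝ᵥ (P₀ *ᵥ Φ₂) ≤ ((ε : ℝ) : ℂ)) :
    2 * Real.sqrt (1 - ε ^ 2) ≤
      2 * Real.sqrt (1 - ‖star Φ₁ ⬝ᵥ Φ₂‖ ^ 2) :=
  traceDist_ge_of_one_sided_error_povm_general d Φ₁ Φ₂ ε P₀ P₁ P₂ hP₀ hP₁ hP₂ hsum he₁ he₂ hi₁ hi₂
end

section
/- (Perfect distinguishability case of Eq. (F).) Let W be an n×n complex unitary matrix. If 0 belongs to the convex hull (over ℝ, in ℂ ≅ ℝ²) of the spectrum of W, then there exists a unit vector ψ ∈ ℂⁿ with ⟨ψ, Wψ⟩ = 0. -/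
/-!
For a unitary, eigenvectors of distinct eigenvalues are orthogonal: `⟪x, y⟫ = conj μ * ν * ⟪x, y⟫`
while `conj μ * μ = 1`. So one unit eigenvector `u μ` per eigenvalue gives an orthonormal family,
and if `0 = ∑ w μ • μ` is a convex combination of eigenvalues, then `ψ = ∑ √(w μ) • u μ` is a unit
vector with `⟪ψ, W ψ⟫ = ∑ w μ • μ = 0`.
-/

open Matrix Module.End
open scoped InnerProductSpace ComplexConjugate

section InnerProductSpace

variable {𝕜 E : Type*} [RCLike 𝕜] [NormedAddCommGroup E] [InnerProductSpace 𝕜 E]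

theorem inner_eq_zero_of_hasEigenvector_of_inner_map_map {T : Module.End 𝕜 E}
    (hT : ∀ x y, ⟪T x, T y⟫_𝕜 = ⟪x, y⟫_𝕜) {μ ν : 𝕜} {x y : E} (hx : T.HasEigenvector μ x)
    (hy : T y = ν • y) (hμν : μ ≠ ν) : ⟪x, y⟫_𝕜 = 0 := by
  have hx' : T x = μ • x := hx.apply_eq_smul
  have hxx : ⟪x, x⟫_𝕜 ≠ 0 := inner_self_ne_zero.mpr hx.2
  have hμ : conj μ * μ = 1 := by
    have := hT x x
    rw [hx', inner_smul_left, inner_smul_right, ← mul_assoc] at this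
    exact (mul_eq_right₀ hxx).mp this
  by_contra hxy
  have hμν' : conj μ * ν = 1 := by
    have := hT x y
    rw [hx', hy, inner_smul_left, inner_smul_right, ← mul_assoc] at this
    exact (mul_eq_right₀ hxy).mp this
  exact hμν (mul_left_cancel₀ (left_ne_zero_of_mul_eq_one hμ) (hμ.trans hμν'.symm))

theorem exists_orthonormal_eigenvectors_of_inner_map_map {T : Module.End 𝕜 E}
    (hT : ∀ x y, ⟪T x, T y⟫_𝕜 = ⟪x, y⟫_𝕜) {s : Set 𝕜} (hs : ∀ μ ∈ s, T.HasEigenvalue μ) :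
    ∃ u : s → E, Orthonormal 𝕜 u ∧ ∀ μ : s, T (u μ) = (μ : 𝕜) • u μ := by
  have unit_eigenvector (μ : s) : ∃ x, T.HasEigenvector μ x ∧ ‖x‖ = 1 := by
    obtain ⟨x, hx⟩ := (hs μ μ.2).exists_hasEigenvector
    refine ⟨(‖x‖⁻¹ : 𝕜) • x, ⟨Submodule.smul_mem _ _ hx.1, ?_⟩, norm_smul_inv_norm hx.2⟩
    exact smul_ne_zero (by simpa using hx.2) hx.2
  choose u hu hu1 using unit_eigenvector
  refine ⟨u, ⟨hu1, fun μ ν hμν => ?_⟩, fun μ => (hu μ).apply_eq_smul⟩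
  exact inner_eq_zero_of_hasEigenvector_of_inner_map_map hT (hu μ) (hu ν).apply_eq_smul
    (Subtype.coe_injective.ne hμν)

theorem Orthonormal.exists_inner_self_eq_one_inner_map_self_eq_sum {ι : Type*} [Fintype ι]
    {T : Module.End 𝕜 E} {u : ι → E} (hu : Orthonormal 𝕜 u) {μ : ι → 𝕜}
    (hTu : ∀ i, T (u i) = μ i • u i) {w : ι → ℝ} (hw₀ : ∀ i, 0 ≤ w i) (hw₁ : ∑ i, w i = 1) :
    ∃ ψ : E, ⟪ψ, ψ⟫_𝕜 = 1 ∧ ⟪ψ, T ψ⟫_𝕜 = ∑ i, w i • μ i := by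
  have hsqrt (i : ι) : conj (√(w i) : 𝕜) * √(w i) = w i := by
    rw [RCLike.conj_ofReal, ← RCLike.ofReal_mul, Real.mul_self_sqrt (hw₀ i)]
  refine ⟨∑ i, (√(w i) : 𝕜) • u i, ?_, ?_⟩
  · rw [hu.inner_sum]
    simp only [hsqrt]
    exact_mod_cast hw₁
  · have hTψ : T (∑ i, (√(w i) : 𝕜) • u i) = ∑ i, ((√(w i) : 𝕜) * μ i) • u i := by
      simp only [map_sum, map_smul, hTu, smul_smul]
    rw [hTψ, hu.inner_sum]
    simp only [← mul_assoc, hsqrt, RCLike.real_smul_eq_coe_mul]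

end InnerProductSpace

theorem Matrix.inner_toEuclideanLin_of_mem_unitaryGroup {𝕜 ι : Type*} [RCLike 𝕜] [Fintype ι]
    [DecidableEq ι] {W : Matrix ι ι 𝕜} (hW : W ∈ unitaryGroup ι 𝕜) (x y : EuclideanSpace 𝕜 ι) :
    ⟪toEuclideanLin W x, toEuclideanLin W y⟫_𝕜 = ⟪x, y⟫_𝕜 := by
  rw [← coe_toEuclideanCLM_eq_toEuclideanLin]
  exact ContinuousLinearMap.inner_map_map_of_mem_unitary (Unitary.map_mem _ hW) x y

/-- Perfect distinguishability case of Eq. (F): if `0` lies in the convex hull of the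
spectrum of a unitary `W`, then `⟨ψ, Wψ⟩ = 0` for some unit vector `ψ`. -/
theorem exists_orthogonal_state_of_zero_mem_convexHull_spectrum (n : ℕ)
    (W : Matrix (Fin n) (Fin n) ℂ) (hW : W ∈ Matrix.unitaryGroup (Fin n) ℂ)
    (h0 : (0 : ℂ) ∈ convexHull ℝ (spectrum ℂ W)) :
    ∃ ψ : Fin n → ℂ, star ψ ⬝ᵥ ψ = 1 ∧ star ψ ⬝ᵥ (W *ᵥ ψ) = 0 := by
  obtain ⟨S, hS⟩ := (finite_spectrum W).exists_finset_coe
  rw [← hS, Finset.convexHull_eq] at h0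
  obtain ⟨w, hw₀, hw₁, hw⟩ := h0
  obtain ⟨u, hu, hTu⟩ := exists_orthonormal_eigenvectors_of_inner_map_map
    (inner_toEuclideanLin_of_mem_unitaryGroup hW) (s := (S : Set ℂ)) fun μ hμ => by
      rw [hasEigenvalue_iff_mem_spectrum, spectrum_toLpLin 2, ← hS]
      exact hμ
  obtain ⟨ψ, hψ₁, hψW⟩ := hu.exists_inner_self_eq_one_inner_map_self_eq_sum hTu
    (w := fun μ => w μ) (fun μ => hw₀ μ μ.2) ((Finset.sum_coe_sort S w).trans hw₁)
  refine ⟨ψ.ofLp, ?_, ?_⟩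
  · rwa [dotProduct_comm]
  · rw [dotProduct_comm, ← toLin'_apply, ← ofLp_toLpLin 2 2,
      ← EuclideanSpace.inner_eq_star_dotProduct, hψW, ← hw, Finset.centerMass_eq_of_sum_1 _ _ hw₁]
    exact Finset.sum_coe_sort S fun μ => w μ • μ
end

section
/- (Theorem 1(i): query lower bound for bounded-error discrimination.) Let U₁, U₂ be n×n complex unitary matrices, and suppose all eigenvalues of U₁†U₂ lie on an arc of length Θ with 0 < Θ ≤ 2π (i.e., there exists θ₀ ∈ ℝ such that every λ in the spectrum of U₁†U₂ equals exp(i(θ₀ + t)) for some t ∈ [0, Θ]). Let ε ∈ [0, 1/2]. Suppose there is a T-query discrimination procedure with an m-dimensional ancilla, with output states Φᵢ = W_T(Uᵢ ⊗ I)W_{T−1}(Uᵢ ⊗ I)⋯W₁(Uᵢ ⊗ I)W₀φ₀, and a two-outcome POVM (Π₁, Π₂) with ⟨Φ₁, Π₁Φ₁⟩ ≥ 1 − ε and ⟨Φ₂, Π₂Φ₂⟩ ≥ 1 − ε. Then T ≥ 2·√(1 − 4ε(1 − ε)) / Θ (as an inequality of real numbers, with T the number of queries; equivalently T ≥ ⌈2·√(1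 − 4ε(1 − ε))/Θ⌉). -/
open Matrix Kronecker ComplexOrder

set_option linter.unusedSectionVars false
set_option maxHeartbeats 1000000

namespace BEQLB

section dots
variable {α : Type*} [Fintype α] [DecidableEq α]

lemma dot_cs (u v : α → ℂ) :
    ‖star u ⬝ᵥ v‖ ≤ Real.sqrt (star u ⬝ᵥ u).re * Real.sqrt (star v ⬝ᵥ v).re := by
  have hu : star u ⬝ᵥ u =
      inner (𝕜 := ℂ) ((WithLp.equiv 2 (α → ℂ)).symm u) ((WithLp.equiv 2 (α → ℂ)).symm u) :=
    by rw [dotProduct_comm]; exact (EuclideanSpace.inner_toLp_toLp u u).symm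
  have hv : star v ⬝ᵥ v =
      inner (𝕜 := ℂ) ((WithLp.equiv 2 (α → ℂ)).symm v) ((WithLp.equiv 2 (α → ℂ)).symm v) :=
    by rw [dotProduct_comm]; exact (EuclideanSpace.inner_toLp_toLp v v).symm
  have huv : star u ⬝ᵥ v =
      inner (𝕜 := ℂ) ((WithLp.equiv 2 (α → ℂ)).symm u) ((WithLp.equiv 2 (α → ℂ)).symm v) :=
    by rw [dotProduct_comm]; exact (EuclideanSpace.inner_toLp_toLp u v).symm
  rw [hu, hv, huv]
  calc ‖inner (𝕜 := ℂ) ((WithLp.equiv 2 (α → ℂ)).symm u) ((WithLp.equiv 2 (α → ℂ)).symm v)‖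
      ≤ ‖(WithLp.equiv 2 (α → ℂ)).symm u‖ * ‖(WithLp.equiv 2 (α → ℂ)).symm v‖ :=
        norm_inner_le_norm _ _
    _ = _ := by
        rw [norm_eq_sqrt_re_inner (𝕜 := ℂ), norm_eq_sqrt_re_inner (𝕜 := ℂ)]
        rfl

lemma dot_mul_conjT (A B : Matrix α α ℂ) (x y : α → ℂ) :
    star (A *ᵥ x) ⬝ᵥ (B *ᵥ y) = star x ⬝ᵥ ((Aᴴ * B) *ᵥ y) := by
  rw [star_mulVec, dotProduct_mulVec, vecMul_vecMul, ← dotProduct_mulVec]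

lemma dot_unitary {A : Matrix α α ℂ} (h : Aᴴ * A = 1) (x y : α → ℂ) :
    star (A *ᵥ x) ⬝ᵥ (A *ᵥ y) = star x ⬝ᵥ y := by
  rw [dot_mul_conjT, h, one_mulVec]

lemma re_le_one {x y : α → ℂ} (hx : star x ⬝ᵥ x = 1) (hy : star y ⬝ᵥ y = 1) :
    (star x ⬝ᵥ y).re ≤ 1 := by
  have h1 := dot_cs x y
  rw [hx, hy] at h1
  simp only [Complex.one_re, Real.sqrt_one, mul_one] at h1
  calc (star x ⬝ᵥ y).re ≤ ‖star x ⬝ᵥ y‖ := Complex.re_le_norm _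
    _ ≤ 1 := h1

/-- Spherical triangle inequality in cosine form. -/
lemma tri (x y w : α → ℂ) (hx : star x ⬝ᵥ x = 1) (hy : star y ⬝ᵥ y = 1)
    (hw : star w ⬝ᵥ w = 1) :
    (star x ⬝ᵥ y).re * (star y ⬝ᵥ w).re
      - Real.sqrt (1 - (star x ⬝ᵥ y).re ^ 2) * Real.sqrt (1 - (star y ⬝ᵥ w).re ^ 2)
      ≤ (star x ⬝ᵥ w).re := by
  set a : ℝ := (star x ⬝ᵥ y).re with ha
  set b : ℝ := (star y ⬝ᵥ w).re with hb
  set u : α → ℂ := x - (a : ℂ) • y with hu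
  set v : α → ℂ := w - (b : ℂ) • y with hv
  have hconj : star y ⬝ᵥ x = starRingEnd ℂ (star x ⬝ᵥ y) := by
    rw [star_dotProduct]; simp
  have hconj' : star y ⬝ᵥ w = starRingEnd ℂ (star w ⬝ᵥ y) := by
    rw [star_dotProduct]; simp
  have hstaru : star u = star x - (a : ℂ) • star y := by
    rw [hu, star_sub, star_smul]; simp
  have hstarv : star v = star w - (b : ℂ) • star y := by
    rw [hv, star_sub, star_smul]; simp
  have euu : (star u ⬝ᵥ u).re = 1 - a ^ 2 := by
    rw [hstaru, hu, sub_dotProduct, dotProduct_sub, dotProduct_sub,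
      smul_dotProduct, smul_dotProduct, dotProduct_smul, dotProduct_smul, hx, hy, hconj]
    simp only [Complex.sub_re, Complex.mul_re, Complex.ofReal_re, Complex.ofReal_im,
      smul_eq_mul, Complex.one_re, _root_.map_mul, Complex.conj_re, Complex.conj_im,
      Complex.ofReal_mul, Complex.mul_im]
    rw [← ha]
    ring
  have evv : (star v ⬝ᵥ v).re = 1 - b ^ 2 := by
    rw [hstarv, hv, sub_dotProduct, dotProduct_sub, dotProduct_sub,
      smul_dotProduct, smul_dotProduct, dotProduct_smul, dotProduct_smul, hw, hy, hconj']
    have hwy : (star w ⬝ᵥ y).re = b := by rw [hb, hconj']; simp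
    simp only [Complex.sub_re, Complex.mul_re, Complex.ofReal_re, Complex.ofReal_im,
      smul_eq_mul, Complex.one_re, _root_.map_mul, Complex.conj_re, Complex.conj_im,
      Complex.ofReal_mul, Complex.mul_im]
    rw [hwy]
    ring
  have euv : (star u ⬝ᵥ v).re = (star x ⬝ᵥ w).re - a * b := by
    rw [hstaru, hv, sub_dotProduct, dotProduct_sub, dotProduct_sub,
      smul_dotProduct, smul_dotProduct, dotProduct_smul, dotProduct_smul, hy]
    simp only [Complex.sub_re, Complex.add_re, Complex.mul_re, Complex.ofReal_re,
      Complex.ofReal_im, smul_eq_mul, Complex.one_re, Complex.one_im, Complex.mul_im]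
    rw [← ha, ← hb]
    ring
  have hcs := dot_cs u v
  have h1 : |(star u ⬝ᵥ v).re| ≤ ‖star u ⬝ᵥ v‖ := Complex.abs_re_le_norm _
  rw [euu, evv] at hcs
  have h2 : -(Real.sqrt (1 - a ^ 2) * Real.sqrt (1 - b ^ 2)) ≤ (star u ⬝ᵥ v).re := by
    have := (abs_le.mp (h1.trans hcs)).1
    linarith
  rw [euv] at h2
  linarith

end dots

lemma arccos_le_arccos' {x y : ℝ} (h : x ≤ y) : Real.arccos y ≤ Real.arccos x := by
  rw [Real.arccos_eq_pi_div_two_sub_arcsin, Real.arccos_eq_pi_div_two_sub_arcsin]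
  have := Real.monotone_arcsin h
  linarith

lemma trig_step (α γ a b : ℝ) (hα : 0 ≤ α) (hγ : 0 ≤ γ) (hsum : α + γ ≤ Real.pi)
    (ha1 : a ≤ 1) (hb1 : b ≤ 1) (ha : Real.cos α ≤ a) (hb : Real.cos γ ≤ b) :
    Real.cos (α + γ) ≤ a * b - Real.sqrt (1 - a ^ 2) * Real.sqrt (1 - b ^ 2) := by
  have hapi : α ≤ Real.pi := by linarith
  have hgpi : γ ≤ Real.pi := by linarith
  have ha' : -1 ≤ a := le_trans (Real.neg_one_le_cos α) ha
  have hb' : -1 ≤ b := le_trans (Real.neg_one_le_cos γ) hb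
  have h1 : Real.arccos a ≤ α := by
    calc Real.arccos a ≤ Real.arccos (Real.cos α) := arccos_le_arccos' ha
    _ = α := Real.arccos_cos hα hapi
  have h2 : Real.arccos b ≤ γ := by
    calc Real.arccos b ≤ Real.arccos (Real.cos γ) := arccos_le_arccos' hb
    _ = γ := Real.arccos_cos hγ hgpi
  have key : Real.cos (α + γ) ≤ Real.cos (Real.arccos a + Real.arccos b) := by
    apply Real.cos_le_cos_of_nonneg_of_le_pi
    · exact add_nonneg (Real.arccos_nonneg _) (Real.arccos_nonneg _)
    · exact hsum
    · exact add_le_add h1 h2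
  calc Real.cos (α + γ) ≤ Real.cos (Real.arccos a + Real.arccos b) := key
    _ = a * b - Real.sqrt (1 - a ^ 2) * Real.sqrt (1 - b ^ 2) := by
        rw [Real.cos_add, Real.cos_arccos ha' ha1, Real.cos_arccos hb' hb1,
          Real.sin_arccos, Real.sin_arccos]

lemma helstrom_num {p q ε : ℝ} (hp0 : 0 ≤ p) (hq0 : 0 ≤ q) (hpε : p ≤ ε) (hqε : q ≤ ε)
    (hε : ε ≤ 1/2) :
    Real.sqrt ((1 - p) * q) + Real.sqrt (p * (1 - q)) ≤ 2 * Real.sqrt (ε * (1 - ε)) := by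
  have hp1 : p ≤ 1 := by linarith
  have hq1 : q ≤ 1 := by linarith
  have h1 : Real.sqrt ((1 - p) * q) * Real.sqrt (p * (1 - q))
      ≤ (p * (1 - p) + q * (1 - q)) / 2 := by
    rw [← Real.sqrt_mul (by nlinarith)]
    have h2 : (1 - p) * q * (p * (1 - q)) = (p * (1 - p)) * (q * (1 - q)) := by ring
    rw [h2, Real.sqrt_mul (by nlinarith)]
    nlinarith [sq_nonneg (Real.sqrt (p * (1 - p)) - Real.sqrt (q * (1 - q))),
      Real.sq_sqrt (show (0:ℝ) ≤ p * (1 - p) by nlinarith),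
      Real.sq_sqrt (show (0:ℝ) ≤ q * (1 - q) by nlinarith)]
  have hsq : (Real.sqrt ((1 - p) * q) + Real.sqrt (p * (1 - q))) ^ 2 ≤ 4 * (ε * (1 - ε)) := by
    have e1 : Real.sqrt ((1 - p) * q) ^ 2 = (1 - p) * q := Real.sq_sqrt (by nlinarith)
    have e2 : Real.sqrt (p * (1 - q)) ^ 2 = p * (1 - q) := Real.sq_sqrt (by nlinarith)
    nlinarith [h1]
  have hnn : 0 ≤ Real.sqrt ((1 - p) * q) + Real.sqrt (p * (1 - q)) := by positivity
  have h3 := Real.sqrt_le_sqrt hsq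
  rw [Real.sqrt_sq hnn] at h3
  calc Real.sqrt ((1 - p) * q) + Real.sqrt (p * (1 - q)) ≤ Real.sqrt (4 * (ε * (1 - ε))) := h3
    _ = 2 * Real.sqrt (ε * (1 - ε)) := by
        rw [show (4:ℝ) * (ε * (1-ε)) = 2^2 * (ε*(1-ε)) by ring, Real.sqrt_mul (by positivity),
          Real.sqrt_sq (by norm_num)]

lemma kron_one_conjTranspose {n m : ℕ} (A : Matrix (Fin n) (Fin n) ℂ) :
    (A ⊗ₖ (1 : Matrix (Fin m) (Fin m) ℂ))ᴴ = Aᴴ ⊗ₖ 1 := by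
  ext ⟨i, j⟩ ⟨k, l⟩
  by_cases hjl : j = l <;>
    simp [conjTranspose_apply, kroneckerMap_apply, Matrix.one_apply, hjl, eq_comm]

lemma smul_one_sub_kron_one {n m : ℕ} (a : ℂ) (V : Matrix (Fin n) (Fin n) ℂ) :
    (a • (1 : Matrix (Fin n) (Fin n) ℂ) - V) ⊗ₖ (1 : Matrix (Fin m) (Fin m) ℂ)
      = a • (1 : Matrix (Fin n × Fin m) (Fin n × Fin m) ℂ) - V ⊗ₖ 1 := by
  ext ⟨i, j⟩ ⟨k, l⟩
  by_cases hik : i = k <;> by_cases hjl : j = l <;>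
    simp [kroneckerMap_apply, Matrix.one_apply, Matrix.sub_apply, Matrix.smul_apply,
      Prod.ext_iff, hik, hjl, sub_mul]

lemma numerical_range {n m : ℕ} (hm : 0 < m) (V : Matrix (Fin n) (Fin n) ℂ)
    (hV1 : Vᴴ * V = 1) (hV2 : V * Vᴴ = 1) (c β : ℝ) (hβ0 : 0 ≤ β) (hβπ : β ≤ Real.pi)
    (hspecV : ∀ lam ∈ spectrum ℂ V, ∃ s ∈ Set.Icc (-β) β,
      lam = Complex.exp (Complex.I * ((c : ℂ) + (s : ℂ))))
    (y : Fin n × Fin m → ℂ) (hy : star y ⬝ᵥ y = 1) :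
    Real.cos β ≤ (Complex.exp (-(c : ℂ) * Complex.I)
      * (star y ⬝ᵥ ((V ⊗ₖ (1 : Matrix (Fin m) (Fin m) ℂ)) *ᵥ y))).re := by
  classical
  set N : Matrix (Fin n × Fin m) (Fin n × Fin m) ℂ := V ⊗ₖ (1 : Matrix (Fin m) (Fin m) ℂ)
    with hN
  have hNH : Nᴴ = Vᴴ ⊗ₖ 1 := kron_one_conjTranspose V
  have hNN' : N * Nᴴ = 1 := by
    rw [hNH, hN, ← mul_kronecker_mul, hV2, Matrix.one_mul, one_kronecker_one]
  set ζ : ℂ := Complex.exp (-(c : ℂ) * Complex.I) with hζdef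
  have hζconj : starRingEnd ℂ ζ = Complex.exp ((c : ℂ) * Complex.I) := by
    rw [hζdef, ← Complex.exp_conj]
    congr 1
    simp
  have hζζ : ζ * starRingEnd ℂ ζ = 1 := by
    rw [hζconj, hζdef, ← Complex.exp_add]
    rw [show -(c : ℂ) * Complex.I + (c : ℂ) * Complex.I = 0 by ring]
    exact Complex.exp_zero
  set E : Matrix (Fin n × Fin m) (Fin n × Fin m) ℂ := ζ • N with hE
  have hEH : Eᴴ = starRingEnd ℂ ζ • Nᴴ := by
    rw [hE, Matrix.conjTranspose_smul]
    rfl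
  have hEE : E * Eᴴ = 1 := by
    rw [hE, hEH, Matrix.smul_mul, Matrix.mul_smul, smul_smul, hNN', hζζ, one_smul]
  have hdetE : E.det ≠ 0 := by
    intro h0
    have h1 := congrArg Matrix.det hEE
    rw [Matrix.det_mul, Matrix.det_one, h0, zero_mul] at h1
    exact zero_ne_one h1
  set r : ℝ := 2 * Real.cos β with hr
  set K : Matrix (Fin n × Fin m) (Fin n × Fin m) ℂ := E + Eᴴ - (r : ℂ) • 1 with hK
  have hKH : K.IsHermitian := by
    have h1 : (((r : ℝ) : ℂ) • (1 : Matrix (Fin n × Fin m) (Fin n × Fin m) ℂ))ᴴ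
        = ((r : ℝ) : ℂ) • 1 := by
      rw [Matrix.conjTranspose_smul, Matrix.conjTranspose_one]
      congr 1
      exact Complex.conj_ofReal r
    unfold Matrix.IsHermitian
    rw [hK, Matrix.conjTranspose_sub, Matrix.conjTranspose_add,
      Matrix.conjTranspose_conjTranspose, h1]
    abel
  have heig : ∀ i, 0 ≤ hKH.eigenvalues i := by
    intro i
    set μ : ℝ := hKH.eigenvalues i with hμ
    have hμs : (μ : ℂ) ∈ spectrum ℂ K :=
      spectrum.algebraMap_mem ℂ (hKH.eigenvalues_mem_spectrum_real i)
    have hdetK : ((μ : ℂ) • (1 : Matrix (Fin n × Fin m) (Fin n × Fin m) ℂ) - K).det = 0 := by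
      have h2 := spectrum.mem_iff.mp hμs
      rw [Algebra.algebraMap_eq_smul_one] at h2
      by_contra hne
      exact h2 ((Matrix.isUnit_iff_isUnit_det _).mpr (isUnit_iff_ne_zero.mpr hne))
    set ν : ℂ := (μ : ℂ) + (r : ℂ) with hν
    obtain ⟨w, hw⟩ := IsAlgClosed.exists_pow_nat_eq (k := ℂ) (ν ^ 2 - 4) zero_lt_two
    set l1 : ℂ := (ν + w) / 2 with hl1
    set l2 : ℂ := (ν - w) / 2 with hl2
    have hsuml : l1 + l2 = ν := by rw [hl1, hl2]; ring
    have hprodl : l1 * l2 = 1 := by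
      have h3 : l1 * l2 = (ν ^ 2 - w ^ 2) / 4 := by rw [hl1, hl2]; ring
      rw [h3, hw]; ring
    have factor : E * ((μ : ℂ) • (1 : Matrix (Fin n × Fin m) (Fin n × Fin m) ℂ) - K)
        = -((E - l1 • 1) * (E - l2 • 1)) := by
      have hc1 : E * (l2 • (1 : Matrix (Fin n × Fin m) (Fin n × Fin m) ℂ)) = l2 • E := by
        rw [Matrix.mul_smul, Matrix.mul_one]
      have hc2 : (l1 • (1 : Matrix (Fin n × Fin m) (Fin n × Fin m) ℂ)) * E = l1 • E := by
        rw [Matrix.smul_mul, Matrix.one_mul]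
      have e1 : (l1 • (1 : Matrix (Fin n × Fin m) (Fin n × Fin m) ℂ)) * (l2 • 1) = 1 := by
        rw [Matrix.smul_mul, Matrix.mul_smul, smul_smul, hprodl, Matrix.one_mul, one_smul]
      have expand : (E - l1 • 1) * (E - l2 • 1) = E * E - (l2 • E + l1 • E) + 1 := by
        rw [Matrix.sub_mul, Matrix.mul_sub, Matrix.mul_sub, hc1, hc2, e1]
        abel
      have hsmul : l2 • E + l1 • E = (μ : ℂ) • E + (r : ℂ) • E := by
        rw [← add_smul, ← add_smul, add_comm l2 l1, hsuml, hν]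
      rw [expand, hsmul, hK]
      simp only [Matrix.mul_sub, Matrix.mul_add, Matrix.mul_smul, Matrix.mul_one, hEE]
      abel
    have hdet0 : (E - l1 • 1).det * (E - l2 • 1).det = 0 := by
      have h3 := congrArg Matrix.det factor
      rw [Matrix.det_mul, hdetK, mul_zero, Matrix.det_neg, Matrix.det_mul] at h3
      have h4 := h3.symm
      rcases mul_eq_zero.mp h4 with h5 | h5
      · exact absurd h5 (pow_ne_zero _ (neg_ne_zero.mpr one_ne_zero))
      · exact h5
    have hspecE : ∀ lam : ℂ, (E - lam • 1).det = 0 → ∃ s ∈ Set.Icc (-β) β,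
        lam = Complex.exp ((s : ℂ) * Complex.I) := by
      intro lam hlam
      have h5 : (lam • (1 : Matrix (Fin n × Fin m) (Fin n × Fin m) ℂ) - E).det = 0 := by
        rw [show lam • (1 : Matrix (Fin n × Fin m) (Fin n × Fin m) ℂ) - E
          = -(E - lam • 1) from (neg_sub E (lam • 1)).symm, Matrix.det_neg, hlam, mul_zero]
      have h6 : lam • (1 : Matrix (Fin n × Fin m) (Fin n × Fin m) ℂ) - E
          = ζ • (((starRingEnd ℂ ζ * lam) • 1 : Matrix (Fin n × Fin m) (Fin n × Fin m) ℂ) - N) := by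
        rw [smul_sub, smul_smul, ← mul_assoc, hζζ, one_mul, hE]
      have h7 : (((starRingEnd ℂ ζ * lam) • 1 : Matrix (Fin n × Fin m) (Fin n × Fin m) ℂ) - N).det = 0 := by
        rw [h6, Matrix.det_smul] at h5
        exact (mul_eq_zero.mp h5).resolve_left (pow_ne_zero _ (Complex.exp_ne_zero _))
      have h8 : (((starRingEnd ℂ ζ * lam) • 1 : Matrix (Fin n) (Fin n) ℂ) - V).det = 0 := by
        rw [hN, ← smul_one_sub_kron_one, Matrix.det_kronecker, Matrix.det_one, one_pow,
          mul_one, Fintype.card_fin] at h7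
        exact pow_eq_zero_iff hm.ne' |>.mp h7
      have h9 : starRingEnd ℂ ζ * lam ∈ spectrum ℂ V := by
        rw [spectrum.mem_iff, Algebra.algebraMap_eq_smul_one]
        rw [Matrix.isUnit_iff_isUnit_det, isUnit_iff_ne_zero]
        simp [h8]
      obtain ⟨t, ht, hlam'⟩ := hspecV _ h9
      refine ⟨t, ht, ?_⟩
      have h10 : lam = ζ * (starRingEnd ℂ ζ * lam) := by
        rw [← mul_assoc, hζζ, one_mul]
      rw [h10, hlam', hζdef, ← Complex.exp_add]
      congr 1
      ring
    obtain ⟨lam, hlamdet, hlamprod⟩ : ∃ lam : ℂ, (E - lam • 1).det = 0 ∧ lam * (ν - lam) = 1 := by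
      rcases mul_eq_zero.mp hdet0 with h | h
      · refine ⟨l1, h, ?_⟩
        rw [show ν - l1 = l2 by rw [← hsuml]; ring]
        exact hprodl
      · refine ⟨l2, h, ?_⟩
        rw [show ν - l2 = l1 by rw [← hsuml]; ring, mul_comm]
        exact hprodl
    obtain ⟨s, hs, hlam⟩ := hspecE lam hlamdet
    have hprodexp : Complex.exp ((s : ℂ) * Complex.I) * Complex.exp (-((s : ℂ) * Complex.I)) = 1 := by
      rw [← Complex.exp_add, add_neg_cancel, Complex.exp_zero]
    have h11 : ν - Complex.exp ((s : ℂ) * Complex.I) = Complex.exp (-((s : ℂ) * Complex.I)) := by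
      have h := hlamprod
      rw [hlam] at h
      apply mul_left_cancel₀ (Complex.exp_ne_zero ((s : ℂ) * Complex.I))
      rw [h, hprodexp]
    have h12 : ν = 2 * Complex.cos ((s : ℝ) : ℂ) := by
      have e1 : Complex.exp ((s : ℂ) * Complex.I)
          = Complex.cos ((s : ℝ) : ℂ) + Complex.sin ((s : ℝ) : ℂ) * Complex.I := by
        rw [Complex.exp_mul_I]
      have e2 : Complex.exp (-((s : ℂ) * Complex.I))
          = Complex.cos ((s : ℝ) : ℂ) - Complex.sin ((s : ℝ) : ℂ) * Complex.I := by
        rw [show -((s : ℂ) * Complex.I) = (-(s : ℂ)) * Complex.I by ring, Complex.exp_mul_I,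
          Complex.cos_neg, Complex.sin_neg]
        ring
      have h' : ν = Complex.exp ((s : ℂ) * Complex.I) + Complex.exp (-((s : ℂ) * Complex.I)) := by
        rw [← h11]; ring
      rw [h', e1, e2]; ring
    have h14 : μ = 2 * Real.cos s - 2 * Real.cos β := by
      have h13 : (μ : ℂ) = ((2 * Real.cos s - 2 * Real.cos β : ℝ) : ℂ) := by
        rw [hν, hr] at h12
        push_cast at h12 ⊢
        linear_combination h12
      exact_mod_cast h13
    have h15 : Real.cos β ≤ Real.cos s := by
      rw [← Real.cos_abs s]
      apply Real.cos_le_cos_of_nonneg_of_le_pi (abs_nonneg s) hβπ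
      exact abs_le.mpr ⟨hs.1, hs.2⟩
    rw [h14]; linarith
  have hPSD : K.PosSemidef := hKH.posSemidef_iff_eigenvalues_nonneg.mpr heig
  have h8 := hPSD.dotProduct_mulVec_nonneg y
  have hexp : star y ⬝ᵥ (K *ᵥ y) = star y ⬝ᵥ (E *ᵥ y) + star y ⬝ᵥ (Eᴴ *ᵥ y) - (r : ℂ) := by
    rw [hK]
    simp only [Matrix.sub_mulVec, Matrix.add_mulVec, Matrix.smul_mulVec,
      Matrix.one_mulVec, dotProduct_sub, dotProduct_add, dotProduct_smul, hy, smul_eq_mul,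
      mul_one]
  have hconj2 : star y ⬝ᵥ (Eᴴ *ᵥ y) = star (star y ⬝ᵥ (E *ᵥ y)) := by
    rw [Matrix.dotProduct_mulVec, ← Matrix.star_mulVec, star_dotProduct]
  have hre : 0 ≤ (star y ⬝ᵥ (K *ᵥ y)).re := by
    have := (Complex.le_def.mp h8).1
    simpa using this
  rw [hexp] at hre
  have hEy : star y ⬝ᵥ (E *ᵥ y) = ζ * (star y ⬝ᵥ (N *ᵥ y)) := by
    rw [hE, Matrix.smul_mulVec, dotProduct_smul, smul_eq_mul]
  rw [hconj2, hEy] at hre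
  simp only [Complex.sub_re, Complex.add_re, Complex.ofReal_re] at hre
  rw [show (star (ζ * (star y ⬝ᵥ (N *ᵥ y)))).re = (ζ * (star y ⬝ᵥ (N *ᵥ y))).re from
    Complex.conj_re _] at hre
  rw [hr] at hre
  linarith


end BEQLB
open BEQLB in
/-- Theorem 1(i): if all eigenvalues of `U₁†U₂` lie on an arc of length `Θ ∈ (0, 2π]`
and `U₁, U₂` can be discriminated with bounded error `ε` by a `T`-query procedure,
then `T ≥ 2√(1 - 4ε(1-ε)) / Θ`. -/
theorem bounded_error_query_lower_bound (n m T : ℕ)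
    (U₁ U₂ : Matrix (Fin n) (Fin n) ℂ)
    (hU₁ : U₁ ∈ Matrix.unitaryGroup (Fin n) ℂ) (hU₂ : U₂ ∈ Matrix.unitaryGroup (Fin n) ℂ)
    (Θ θ₀ : ℝ) (hΘ0 : 0 < Θ) (hΘ2π : Θ ≤ 2 * Real.pi)
    (hspec : ∀ lam ∈ spectrum ℂ (U₁ᴴ * U₂), ∃ t ∈ Set.Icc (0 : ℝ) Θ,
      lam = Complex.exp (Complex.I * (θ₀ + t)))
    (φ₀ : Fin n × Fin m → ℂ) (hφ₀ : star φ₀ ⬝ᵥ φ₀ = 1)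
    (W : ℕ → Matrix (Fin n × Fin m) (Fin n × Fin m) ℂ)
    (hW : ∀ k ≤ T, W k ∈ Matrix.unitaryGroup (Fin n × Fin m) ℂ)
    (ψ₁ ψ₂ : ℕ → (Fin n × Fin m → ℂ))
    (hψ₁0 : ψ₁ 0 = W 0 *ᵥ φ₀) (hψ₂0 : ψ₂ 0 = W 0 *ᵥ φ₀)
    (hψ₁s : ∀ k < T, ψ₁ (k + 1) =
      W (k + 1) *ᵥ ((U₁ ⊗ₖ (1 : Matrix (Fin m) (Fin m) ℂ)) *ᵥ ψ₁ k))
    (hψ₂s : ∀ k < T, ψ₂ (k + 1) =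
      W (k + 1) *ᵥ ((U₂ ⊗ₖ (1 : Matrix (Fin m) (Fin m) ℂ)) *ᵥ ψ₂ k))
    (ε : ℝ) (hε : ε ∈ Set.Icc (0 : ℝ) (1/2))
    (P₁ P₂ : Matrix (Fin n × Fin m) (Fin n × Fin m) ℂ)
    (hP₁ : P₁.PosSemidef) (hP₂ : P₂.PosSemidef) (hsum : P₁ + P₂ = 1)
    (hm₁ : ((1 - ε : ℝ) : ℂ) ≤ star (ψ₁ T) ⬝ᵥ (P₁ *ᵥ ψ₁ T))
    (hm₂ : ((1 - ε : ℝ) : ℂ) ≤ star (ψ₂ T) ⬝ᵥ (P₂ *ᵥ ψ₂ T)) :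
    2 * Real.sqrt (1 - 4 * ε * (1 - ε)) / Θ ≤ (T : ℝ) := by
  classical
  -- the ancilla dimension is positive (else `φ₀` cannot be a unit vector)
  have hm : 0 < m := by
    rcases Nat.eq_zero_or_pos m with h0 | h; swap
    · exact h
    exfalso
    subst h0
    rw [show star φ₀ ⬝ᵥ φ₀ = 0 from Fintype.sum_empty _] at hφ₀
    exact zero_ne_one hφ₀
  -- basic unitarity facts
  have h1 : U₁ᴴ * U₁ = 1 := by
    have := Matrix.mem_unitaryGroup_iff'.mp hU₁
    rwa [Matrix.star_eq_conjTranspose] at this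
  have h1' : U₁ * U₁ᴴ = 1 := by
    have := Matrix.mem_unitaryGroup_iff.mp hU₁
    rwa [Matrix.star_eq_conjTranspose] at this
  have h2 : U₂ᴴ * U₂ = 1 := by
    have := Matrix.mem_unitaryGroup_iff'.mp hU₂
    rwa [Matrix.star_eq_conjTranspose] at this
  have h2' : U₂ * U₂ᴴ = 1 := by
    have := Matrix.mem_unitaryGroup_iff.mp hU₂
    rwa [Matrix.star_eq_conjTranspose] at this
  set V : Matrix (Fin n) (Fin n) ℂ := U₁ᴴ * U₂ with hV
  have hV1 : Vᴴ * V = 1 := by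
    rw [hV, Matrix.conjTranspose_mul, Matrix.conjTranspose_conjTranspose, Matrix.mul_assoc,
      ← Matrix.mul_assoc U₁ U₁ᴴ U₂, h1', Matrix.one_mul, h2]
  have hV2 : V * Vᴴ = 1 := by
    rw [hV, Matrix.conjTranspose_mul, Matrix.conjTranspose_conjTranspose,
      Matrix.mul_assoc, ← Matrix.mul_assoc U₂ U₂ᴴ U₁, h2', Matrix.one_mul, h1]
  set β : ℝ := Θ / 2 with hβ
  set c : ℝ := θ₀ + Θ / 2 with hc
  have hβ0 : 0 ≤ β := by rw [hβ]; linarith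
  have hβπ : β ≤ Real.pi := by
    rw [hβ]; linarith [Real.pi_pos]
  have hspecV : ∀ lam ∈ spectrum ℂ V, ∃ s ∈ Set.Icc (-β) β,
      lam = Complex.exp (Complex.I * ((c : ℂ) + (s : ℂ))) := by
    intro lam hlam
    obtain ⟨t, ht, hlam'⟩ := hspec lam hlam
    refine ⟨t - Θ / 2, ⟨by rw [hβ]; simpa using ht.1, by rw [hβ]; linarith [ht.2]⟩, ?_⟩
    rw [hlam']
    congr 1
    rw [hc]
    push_cast
    ring
  set A₁ : Matrix (Fin n × Fin m) (Fin n × Fin m) ℂ := U₁ ⊗ₖ 1 with hA₁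
  set A₂ : Matrix (Fin n × Fin m) (Fin n × Fin m) ℂ := U₂ ⊗ₖ 1 with hA₂
  set Nv : Matrix (Fin n × Fin m) (Fin n × Fin m) ℂ := V ⊗ₖ 1 with hNv
  have hA₁u : A₁ᴴ * A₁ = 1 := by
    rw [hA₁, kron_one_conjTranspose, ← Matrix.mul_kronecker_mul, h1, Matrix.one_mul,
      Matrix.one_kronecker_one]
  have hA₂u : A₂ᴴ * A₂ = 1 := by
    rw [hA₂, kron_one_conjTranspose, ← Matrix.mul_kronecker_mul, h2, Matrix.one_mul,
      Matrix.one_kronecker_one]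
  have hNvu : Nvᴴ * Nv = 1 := by
    rw [hNv, kron_one_conjTranspose, ← Matrix.mul_kronecker_mul, hV1, Matrix.one_mul,
      Matrix.one_kronecker_one]
  have hA₁₂ : A₁ᴴ * A₂ = Nv := by
    rw [hA₁, hA₂, hNv, kron_one_conjTranspose, ← Matrix.mul_kronecker_mul, hV,
      Matrix.one_mul]
  have hW' : ∀ k ≤ T, (W k)ᴴ * W k = 1 := by
    intro k hk
    have := Matrix.mem_unitaryGroup_iff'.mp (hW k hk)
    rwa [Matrix.star_eq_conjTranspose] at this
  -- all intermediate states are unit vectors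
  have hnorm : ∀ k, k ≤ T → star (ψ₁ k) ⬝ᵥ ψ₁ k = 1 ∧ star (ψ₂ k) ⬝ᵥ ψ₂ k = 1 := by
    intro k
    induction k with
    | zero =>
      intro hk
      rw [hψ₁0, hψ₂0, dot_unitary (hW' 0 hk), hφ₀]
      exact ⟨rfl, rfl⟩
    | succ k ih =>
      intro hk
      have hkT : k < T := Nat.lt_of_succ_le hk
      obtain ⟨ih₁, ih₂⟩ := ih (Nat.le_of_lt hkT)
      constructor
      · rw [hψ₁s k hkT, dot_unitary (hW' (k+1) hk), dot_unitary hA₁u, ih₁]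
      · rw [hψ₂s k hkT, dot_unitary (hW' (k+1) hk), dot_unitary hA₂u, ih₂]
  -- the overlap recursion
  have hstep : ∀ k < T, star (ψ₁ (k+1)) ⬝ᵥ ψ₂ (k+1) = star (ψ₁ k) ⬝ᵥ (Nv *ᵥ ψ₂ k) := by
    intro k hk
    rw [hψ₁s k hk, hψ₂s k hk, dot_unitary (hW' (k+1) hk), dot_mul_conjT, hA₁₂]
  set ζ : ℂ := Complex.exp (-(c : ℂ) * Complex.I) with hζdef
  have hζζ : starRingEnd ℂ ζ * ζ = 1 := by
    rw [hζdef, ← Complex.exp_conj, ← Complex.exp_add]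
    rw [show (starRingEnd ℂ) (-(c : ℂ) * Complex.I) + -(c : ℂ) * Complex.I = 0 by simp]
    exact Complex.exp_zero
  have hζk : ∀ k : ℕ, starRingEnd ℂ (ζ ^ k) * ζ ^ k = 1 := by
    intro k
    rw [map_pow, ← mul_pow, hζζ, one_pow]
  have hζ1 : ‖ζ‖ = 1 := by
    rw [hζdef, Complex.norm_exp]
    rw [show (-(c : ℂ) * Complex.I).re = 0 by simp]
    exact Real.exp_zero
  -- reduce the goal to `1 - 2ε ≤ T * β`
  have hgoal : (1 - 2 * ε ≤ (T : ℝ) * β) →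
      2 * Real.sqrt (1 - 4 * ε * (1 - ε)) / Θ ≤ (T : ℝ) := by
    intro h
    rw [show (1:ℝ) - 4 * ε * (1 - ε) = (1 - 2*ε)^2 by ring,
      Real.sqrt_sq (by linarith [hε.2]), div_le_iff₀ hΘ0]
    rw [hβ] at h
    linarith
  apply hgoal
  rcases le_or_gt ((T : ℝ) * β) Real.pi with hTβ | hTβ
  swap
  · -- trivial case: `T * β > π`
    have : (1:ℝ) - 2*ε ≤ 1 := by linarith [hε.1]
    linarith [Real.pi_gt_three]
  -- main case
  have claim : ∀ k, k ≤ T →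
      Real.cos ((k : ℝ) * β) ≤ (ζ ^ k * (star (ψ₁ k) ⬝ᵥ ψ₂ k)).re := by
    intro k
    induction k with
    | zero =>
      intro hk
      rw [hψ₁0, hψ₂0, dot_unitary (hW' 0 hk), hφ₀]
      simp
    | succ k ih =>
      intro hk
      have hkT : k < T := Nat.lt_of_succ_le hk
      have ihc := ih (Nat.le_of_lt hkT)
      obtain ⟨hn1, hn2⟩ := hnorm k (Nat.le_of_lt hkT)
      set x : Fin n × Fin m → ℂ := ψ₁ k with hx
      set yv : Fin n × Fin m → ℂ := ζ ^ k • ψ₂ k with hyv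
      set wv : Fin n × Fin m → ℂ := ζ ^ (k+1) • (Nv *ᵥ ψ₂ k) with hwv
      have hyu : star yv ⬝ᵥ yv = 1 := by
        rw [hyv, star_smul, smul_dotProduct, dotProduct_smul, smul_eq_mul, smul_eq_mul,
          ← mul_assoc]
        rw [show star (ζ ^ k) = starRingEnd ℂ (ζ ^ k) from rfl, hζk k, one_mul, hn2]
      have hwu : star wv ⬝ᵥ wv = 1 := by
        rw [hwv, star_smul, smul_dotProduct, dotProduct_smul, smul_eq_mul, smul_eq_mul,
          ← mul_assoc]
        rw [show star (ζ ^ (k+1)) = starRingEnd ℂ (ζ ^ (k+1)) from rfl, hζk (k+1), one_mul,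
          dot_unitary hNvu, hn2]
      have hxy : star x ⬝ᵥ yv = ζ ^ k * (star (ψ₁ k) ⬝ᵥ ψ₂ k) := by
        rw [hyv, dotProduct_smul, smul_eq_mul]
      have hyw : star yv ⬝ᵥ wv = ζ * (star (ψ₂ k) ⬝ᵥ (Nv *ᵥ ψ₂ k)) := by
        rw [hyv, hwv, star_smul, smul_dotProduct, dotProduct_smul, smul_eq_mul, smul_eq_mul,
          ← mul_assoc]
        rw [show star (ζ ^ k) = starRingEnd ℂ (ζ ^ k) from rfl]
        rw [pow_succ, ← mul_assoc, hζk k, one_mul]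
      have hxw : star x ⬝ᵥ wv = ζ ^ (k+1) * (star (ψ₁ (k+1)) ⬝ᵥ ψ₂ (k+1)) := by
        rw [hwv, dotProduct_smul, smul_eq_mul, hstep k hkT]
      have hb : Real.cos β ≤ (star yv ⬝ᵥ wv).re := by
        rw [hyw]
        exact numerical_range hm V hV1 hV2 c β hβ0 hβπ hspecV (ψ₂ k) hn2
      have ha : Real.cos ((k : ℝ) * β) ≤ (star x ⬝ᵥ yv).re := by rw [hxy]; exact ihc
      have ha1 : (star x ⬝ᵥ yv).re ≤ 1 := re_le_one hn1 hyu
      have hb1 : (star yv ⬝ᵥ wv).re ≤ 1 := re_le_one hyu hwu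
      have htri := tri x yv wv hn1 hyu hwu
      have hsum' : (k : ℝ) * β + β ≤ Real.pi := by
        have hcast : ((k : ℝ) + 1) ≤ (T : ℝ) := by exact_mod_cast hk
        nlinarith [hβ0]
      have hts := trig_step ((k : ℝ) * β) β ((star x ⬝ᵥ yv).re) ((star yv ⬝ᵥ wv).re)
        (by positivity) hβ0 hsum' ha1 hb1 ha hb
      have hfin : Real.cos ((k : ℝ) * β + β) ≤ (star x ⬝ᵥ wv).re := le_trans hts htri
      rw [hxw] at hfin
      rw [show ((k+1 : ℕ) : ℝ) * β = (k : ℝ) * β + β by push_cast; ring]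
      exact hfin
  have hclaimT := claim T le_rfl
  -- Helstrom bound on the final overlap
  set Φ₁ : Fin n × Fin m → ℂ := ψ₁ T with hΦ₁
  set Φ₂ : Fin n × Fin m → ℂ := ψ₂ T with hΦ₂
  obtain ⟨hu1, hu2⟩ := hnorm T le_rfl
  set p : ℝ := (star Φ₁ ⬝ᵥ (P₂ *ᵥ Φ₁)).re with hp
  set q : ℝ := (star Φ₂ ⬝ᵥ (P₁ *ᵥ Φ₂)).re with hq
  have hsplit1 : star Φ₁ ⬝ᵥ (P₁ *ᵥ Φ₁) + star Φ₁ ⬝ᵥ (P₂ *ᵥ Φ₁) = 1 := by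
    rw [← dotProduct_add, ← Matrix.add_mulVec, hsum, Matrix.one_mulVec, hu1]
  have hsplit2 : star Φ₂ ⬝ᵥ (P₁ *ᵥ Φ₂) + star Φ₂ ⬝ᵥ (P₂ *ᵥ Φ₂) = 1 := by
    rw [← dotProduct_add, ← Matrix.add_mulVec, hsum, Matrix.one_mulVec, hu2]
  have hm₁' : 1 - ε ≤ (star Φ₁ ⬝ᵥ (P₁ *ᵥ Φ₁)).re := by
    have := (Complex.le_def.mp hm₁).1
    simpa using this
  have hm₂' : 1 - ε ≤ (star Φ₂ ⬝ᵥ (P₂ *ᵥ Φ₂)).re := by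
    have := (Complex.le_def.mp hm₂).1
    simpa using this
  have hpε : p ≤ ε := by
    have := congrArg Complex.re hsplit1
    simp only [Complex.add_re, Complex.one_re] at this
    rw [hp]; linarith
  have hqε : q ≤ ε := by
    have := congrArg Complex.re hsplit2
    simp only [Complex.add_re, Complex.one_re] at this
    rw [hq]; linarith
  have hp0 : 0 ≤ p := by
    rw [hp]
    have := hP₂.dotProduct_mulVec_nonneg Φ₁
    simpa using (Complex.le_def.mp this).1
  have hq0 : 0 ≤ q := by
    rw [hq]
    have := hP₁.dotProduct_mulVec_nonneg Φ₂
    simpa using (Complex.le_def.mp this).1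
  have hre1 : (star Φ₁ ⬝ᵥ (P₁ *ᵥ Φ₁)).re = 1 - p := by
    have := congrArg Complex.re hsplit1
    simp only [Complex.add_re, Complex.one_re] at this
    rw [hp]; linarith
  have hre2 : (star Φ₂ ⬝ᵥ (P₂ *ᵥ Φ₂)).re = 1 - q := by
    have := congrArg Complex.re hsplit2
    simp only [Complex.add_re, Complex.one_re] at this
    rw [hq]; linarith
  have hover : ‖star Φ₁ ⬝ᵥ Φ₂‖ ≤ 2 * Real.sqrt (ε * (1 - ε)) := by
    obtain ⟨B₁, hB₁⟩ : ∃ B : Matrix (Fin n × Fin m) (Fin n × Fin m) ℂ, P₁ = Bᴴ * B := by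
      open MatrixOrder in
      obtain ⟨B, hB⟩ := CStarAlgebra.nonneg_iff_eq_star_mul_self.mp hP₁.nonneg
      exact ⟨B, hB⟩
    obtain ⟨B₂, hB₂⟩ : ∃ B : Matrix (Fin n × Fin m) (Fin n × Fin m) ℂ, P₂ = Bᴴ * B := by
      open MatrixOrder in
      obtain ⟨B, hB⟩ := CStarAlgebra.nonneg_iff_eq_star_mul_self.mp hP₂.nonneg
      exact ⟨B, hB⟩
    have hterm1 : ‖star Φ₁ ⬝ᵥ (P₁ *ᵥ Φ₂)‖ ≤ Real.sqrt ((1 - p) * q) := by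
      rw [hB₁, ← dot_mul_conjT]
      calc ‖star (B₁ *ᵥ Φ₁) ⬝ᵥ (B₁ *ᵥ Φ₂)‖
          ≤ Real.sqrt (star (B₁ *ᵥ Φ₁) ⬝ᵥ (B₁ *ᵥ Φ₁)).re
            * Real.sqrt (star (B₁ *ᵥ Φ₂) ⬝ᵥ (B₁ *ᵥ Φ₂)).re := dot_cs _ _
        _ = Real.sqrt ((1 - p) * q) := by
            rw [dot_mul_conjT, dot_mul_conjT, ← hB₁, hre1, ← hq,
              ← Real.sqrt_mul (by linarith [hpε, hε.2])]
    have hterm2 : ‖star Φ₁ ⬝ᵥ (P₂ *ᵥ Φ₂)‖ ≤ Real.sqrt (p * (1 - q)) := by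
      rw [hB₂, ← dot_mul_conjT]
      calc ‖star (B₂ *ᵥ Φ₁) ⬝ᵥ (B₂ *ᵥ Φ₂)‖
          ≤ Real.sqrt (star (B₂ *ᵥ Φ₁) ⬝ᵥ (B₂ *ᵥ Φ₁)).re
            * Real.sqrt (star (B₂ *ᵥ Φ₂) ⬝ᵥ (B₂ *ᵥ Φ₂)).re := dot_cs _ _
        _ = Real.sqrt (p * (1 - q)) := by
            rw [dot_mul_conjT, dot_mul_conjT, ← hB₂, hre2, ← hp,
              ← Real.sqrt_mul hp0]
    have hdecomp : star Φ₁ ⬝ᵥ Φ₂ = star Φ₁ ⬝ᵥ (P₁ *ᵥ Φ₂) + star Φ₁ ⬝ᵥ (P₂ *ᵥ Φ₂) := by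
      rw [← dotProduct_add, ← Matrix.add_mulVec, hsum, Matrix.one_mulVec]
    calc ‖star Φ₁ ⬝ᵥ Φ₂‖ ≤ ‖star Φ₁ ⬝ᵥ (P₁ *ᵥ Φ₂)‖ + ‖star Φ₁ ⬝ᵥ (P₂ *ᵥ Φ₂)‖ := by
          rw [hdecomp]; exact norm_add_le _ _
      _ ≤ Real.sqrt ((1 - p) * q) + Real.sqrt (p * (1 - q)) := add_le_add hterm1 hterm2
      _ ≤ 2 * Real.sqrt (ε * (1 - ε)) := helstrom_num hp0 hq0 hpε hqε hε.2
  -- combine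
  set s : ℝ := 2 * Real.sqrt (ε * (1 - ε)) with hs
  have hcos : Real.cos ((T : ℝ) * β) ≤ s := by
    calc Real.cos ((T : ℝ) * β) ≤ (ζ ^ T * (star Φ₁ ⬝ᵥ Φ₂)).re := hclaimT
      _ ≤ ‖ζ ^ T * (star Φ₁ ⬝ᵥ Φ₂)‖ := Complex.re_le_norm _
      _ = ‖star Φ₁ ⬝ᵥ Φ₂‖ := by rw [norm_mul, norm_pow, hζ1, one_pow, one_mul]
      _ ≤ s := hover
  have hs0 : 0 ≤ s := by rw [hs]; positivity
  have hs1 : s ≤ 1 := by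
    rw [hs]
    have h4 : Real.sqrt (ε * (1 - ε)) ≤ 1/2 := by
      rw [show (1:ℝ)/2 = Real.sqrt ((1/2)^2) from (Real.sqrt_sq (by norm_num)).symm]
      apply Real.sqrt_le_sqrt
      nlinarith [hε.1, hε.2]
    linarith
  have hTβ0 : 0 ≤ (T : ℝ) * β := by positivity
  have harc : Real.arccos s ≤ (T : ℝ) * β := by
    calc Real.arccos s ≤ Real.arccos (Real.cos ((T : ℝ) * β)) := arccos_le_arccos' hcos
      _ = (T : ℝ) * β := Real.arccos_cos hTβ0 hTβ
  have hsin : Real.sqrt (1 - s ^ 2) ≤ Real.arccos s := by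
    rw [← Real.sin_arccos]
    exact Real.sin_le (Real.arccos_nonneg s)
  have hssq : s ^ 2 = 4 * (ε * (1 - ε)) := by
    rw [hs, mul_pow, Real.sq_sqrt (by nlinarith [hε.1, hε.2])]
    ring
  have hfin : Real.sqrt (1 - s ^ 2) = 1 - 2 * ε := by
    rw [hssq, show (1:ℝ) - 4 * (ε * (1 - ε)) = (1 - 2*ε)^2 by ring,
      Real.sqrt_sq (by linarith [hε.2])]
  rw [hfin] at hsin
  linarith
end

section
/- (Theorem 1(ii): query lower bound for one-sided-error discrimination.) Let U₁, U₂ be n×n complex unitary matrices, and suppose all eigenvalues of U₁†U₂ lie on an arc of length Θ with 0 < Θ ≤ 2π (i.e., there exists θ₀ ∈ ℝ such that every λ in the spectrum of U₁†U₂ equals exp(i(θ₀ + t)) for some t ∈ [0, Θ]). Let ε ∈ [0, 1]. Suppose there is a T-query discrimination procedure with an m-dimensional ancilla, with output states Φᵢ = W_T(Uᵢ ⊗ I)W_{T−1}(Uᵢ ⊗ I)⋯W₁(Uᵢ ⊗ I)W₀φ₀, and a three-outcome POVM (Π₀, Π₁, Π₂) with ⟨Φ₂, Π₁Φ₂⟩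 = ⟨Φ₁, Π₂Φ₁⟩ = 0 and ⟨Φᵢ, Π₀Φᵢ⟩ ≤ ε for i = 1, 2. Then T ≥ 2·√(1 − ε²) / Θ (as an inequality of real numbers, with T the number of queries; equivalently T ≥ ⌈2·√(1 − ε²)/Θ⌉). -/
open Matrix Kronecker ComplexOrder
open scoped NNReal ENNReal

noncomputable section AuxQD

/-- Identity map into Euclidean space. -/
def toE {ι : Type*} [Fintype ι] (x : ι → ℂ) : EuclideanSpace ℂ ι := WithLp.toLp 2 x

lemma toE_add {ι : Type*} [Fintype ι] (x y : ι → ℂ) : toE (x + y) = toE x + toE y := rfl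
lemma toE_sub {ι : Type*} [Fintype ι] (x y : ι → ℂ) : toE (x - y) = toE x - toE y := rfl
lemma toE_smul {ι : Type*} [Fintype ι] (a : ℂ) (x : ι → ℂ) : toE (a • x) = a • toE x := rfl
lemma toE_zero {ι : Type*} [Fintype ι] : toE (0 : ι → ℂ) = 0 := rfl

lemma dot_eq_inner {ι : Type*} [Fintype ι] (x y : ι → ℂ) :
    star x ⬝ᵥ y = (inner ℂ (toE x) (toE y) : ℂ) := by
  simp [toE, PiLp.inner_apply, dotProduct, mul_comm]

lemma dot_self_eq {ι : Type*} [Fintype ι] (x : ι → ℂ) :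
    star x ⬝ᵥ x = ((‖toE x‖ : ℂ))^2 := by
  rw [dot_eq_inner]; exact inner_self_eq_norm_sq_to_K _

lemma norm_toE_eq {ι : Type*} [Fintype ι] (x : ι → ℂ) :
    ‖toE x‖ = Real.sqrt (∑ i, ‖x i‖ ^ 2) := by
  rw [EuclideanSpace.norm_eq]; rfl

lemma unitary_dot {ι : Type*} [Fintype ι] [DecidableEq ι] {Q : Matrix ι ι ℂ}
    (hQ : Q ∈ Matrix.unitaryGroup ι ℂ) (x y : ι → ℂ) :
    star (Q *ᵥ x) ⬝ᵥ (Q *ᵥ y) = star x ⬝ᵥ y := by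
  rw [star_mulVec, dotProduct_mulVec, vecMul_vecMul,
    show Qᴴ * Q = 1 from Matrix.mem_unitaryGroup_iff'.mp hQ, vecMul_one]

lemma unitary_norm {ι : Type*} [Fintype ι] [DecidableEq ι] {Q : Matrix ι ι ℂ}
    (hQ : Q ∈ Matrix.unitaryGroup ι ℂ) (x : ι → ℂ) :
    ‖toE (Q *ᵥ x)‖ = ‖toE x‖ := by
  have h := congrArg Complex.re ((dot_self_eq (Q *ᵥ x)).symm.trans
    ((unitary_dot hQ x x).trans (dot_self_eq x)))
  simp only [← Complex.ofReal_pow, Complex.ofReal_re] at h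
  calc ‖toE (Q *ᵥ x)‖ = Real.sqrt (‖toE (Q *ᵥ x)‖ ^ 2) := (Real.sqrt_sq (norm_nonneg _)).symm
  _ = Real.sqrt (‖toE x‖ ^ 2) := by rw [h]
  _ = ‖toE x‖ := Real.sqrt_sq (norm_nonneg _)

/-- Cauchy–Schwarz for positive semidefinite matrices. -/
lemma psd_cs {ι : Type*} [Fintype ι] [DecidableEq ι] {P : Matrix ι ι ℂ} (hP : P.PosSemidef)
    (x y : ι → ℂ) :
    ‖star x ⬝ᵥ (P *ᵥ y)‖ ≤
      Real.sqrt (Complex.re (star x ⬝ᵥ (P *ᵥ x))) *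
        Real.sqrt (Complex.re (star y ⬝ᵥ (P *ᵥ y))) := by
  obtain ⟨B, rfl⟩ : ∃ B : Matrix ι ι ℂ, P = Bᴴ * B := by
    open scoped MatrixOrder Matrix.Norms.L2Operator in
    exact CStarAlgebra.nonneg_iff_eq_star_mul_self.mp hP.nonneg
  have key : ∀ u v : ι → ℂ, star u ⬝ᵥ ((Bᴴ * B) *ᵥ v) = star (B *ᵥ u) ⬝ᵥ (B *ᵥ v) := by
    intro u v
    rw [← Matrix.mulVec_mulVec, dotProduct_mulVec, ← star_mulVec]
  rw [key, key, key]
  rw [dot_eq_inner]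
  have hx : Real.sqrt (Complex.re (star (B *ᵥ x) ⬝ᵥ (B *ᵥ x))) = ‖toE (B *ᵥ x)‖ := by
    rw [dot_self_eq]
    simp only [← Complex.ofReal_pow, Complex.ofReal_re]
    exact Real.sqrt_sq (norm_nonneg _)
  have hy : Real.sqrt (Complex.re (star (B *ᵥ y) ⬝ᵥ (B *ᵥ y))) = ‖toE (B *ᵥ y)‖ := by
    rw [dot_self_eq]
    simp only [← Complex.ofReal_pow, Complex.ofReal_re]
    exact Real.sqrt_sq (norm_nonneg _)
  rw [hx, hy]
  exact norm_inner_le_norm _ _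

lemma kron_one_conjTranspose {n m : ℕ} (A : Matrix (Fin n) (Fin n) ℂ) :
    (A ⊗ₖ (1 : Matrix (Fin m) (Fin m) ℂ))ᴴ = Aᴴ ⊗ₖ (1 : Matrix (Fin m) (Fin m) ℂ) := by
  ext ⟨i, j⟩ ⟨k, l⟩
  simp [Matrix.conjTranspose_apply, Matrix.one_apply, apply_ite (starRingEnd ℂ), eq_comm]

lemma kron_one_unitary {n m : ℕ} {A : Matrix (Fin n) (Fin n) ℂ}
    (hA : A ∈ Matrix.unitaryGroup (Fin n) ℂ) :
    A ⊗ₖ (1 : Matrix (Fin m) (Fin m) ℂ) ∈ Matrix.unitaryGroup (Fin n × Fin m) ℂ := by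
  rw [Matrix.mem_unitaryGroup_iff]
  rw [Matrix.star_eq_conjTranspose, kron_one_conjTranspose, ← Matrix.mul_kronecker_mul,
    Matrix.one_mul, show A * Aᴴ = 1 from Matrix.mem_unitaryGroup_iff.mp hA,
    Matrix.one_kronecker_one]

lemma kron_mulVec_apply {n m : ℕ} (A : Matrix (Fin n) (Fin n) ℂ) (y : Fin n × Fin m → ℂ)
    (i : Fin n) (j : Fin m) :
    ((A ⊗ₖ (1 : Matrix (Fin m) (Fin m) ℂ)) *ᵥ y) (i, j) = (A *ᵥ fun k => y (k, j)) i := by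
  simp [Matrix.mulVec, dotProduct, Fintype.sum_prod_type, Matrix.one_apply,
    mul_ite, mul_zero, mul_one, ite_mul, zero_mul]

lemma kron_norm_le {n m : ℕ} {A : Matrix (Fin n) (Fin n) ℂ} {c : ℝ} (hc : 0 ≤ c)
    (h : ∀ x : Fin n → ℂ, ‖toE (A *ᵥ x)‖ ≤ c * ‖toE x‖)
    (y : Fin n × Fin m → ℂ) :
    ‖toE ((A ⊗ₖ (1 : Matrix (Fin m) (Fin m) ℂ)) *ᵥ y)‖ ≤ c * ‖toE y‖ := by
  rw [norm_toE_eq, norm_toE_eq]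
  have key : (∑ p : Fin n × Fin m, ‖((A ⊗ₖ (1 : Matrix (Fin m) (Fin m) ℂ)) *ᵥ y) p‖ ^ 2)
      ≤ c ^ 2 * ∑ p : Fin n × Fin m, ‖y p‖ ^ 2 := by
    rw [Fintype.sum_prod_type_right, Fintype.sum_prod_type_right, Finset.mul_sum]
    refine Finset.sum_le_sum fun j _ => ?_
    have hcol := h (fun k => y (k, j))
    have h1 : ∑ i : Fin n, ‖((A ⊗ₖ (1 : Matrix (Fin m) (Fin m) ℂ)) *ᵥ y) (i, j)‖ ^ 2
        = ‖toE (A *ᵥ fun k => y (k, j))‖ ^ 2 := by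
      rw [norm_toE_eq, Real.sq_sqrt (Finset.sum_nonneg fun i _ => sq_nonneg _)]
      exact Finset.sum_congr rfl fun i _ => by rw [kron_mulVec_apply]
    have h2 : ∑ i : Fin n, ‖y (i, j)‖ ^ 2 = ‖toE (fun k => y (k, j))‖ ^ 2 := by
      rw [norm_toE_eq, Real.sq_sqrt (Finset.sum_nonneg fun i _ => sq_nonneg _)]
    rw [h1, h2]
    calc ‖toE (A *ᵥ fun k => y (k, j))‖ ^ 2 ≤ (c * ‖toE (fun k => y (k, j))‖) ^ 2 := by
          exact pow_le_pow_left₀ (norm_nonneg _) hcol 2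
    _ = c ^ 2 * ‖toE (fun k => y (k, j))‖ ^ 2 := by ring
  calc Real.sqrt (∑ p : Fin n × Fin m, ‖((A ⊗ₖ (1 : Matrix (Fin m) (Fin m) ℂ)) *ᵥ y) p‖ ^ 2)
      ≤ Real.sqrt (c ^ 2 * ∑ p : Fin n × Fin m, ‖y p‖ ^ 2) := Real.sqrt_le_sqrt key
  _ = c * Real.sqrt (∑ p : Fin n × Fin m, ‖y p‖ ^ 2) := by
      rw [Real.sqrt_mul (sq_nonneg c), Real.sqrt_sq hc]

section SpectralBound

open scoped Matrix.Norms.L2Operator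

lemma norm_one_sub_mulVec {n : ℕ} {V : Matrix (Fin n) (Fin n) ℂ}
    (h1 : Vᴴ * V = 1) (h2 : V * Vᴴ = 1) {c : ℝ} (hc : 0 ≤ c)
    (hspec : ∀ μ ∈ spectrum ℂ V, ‖1 - μ‖ ≤ c)
    (x : Fin n → ℂ) : ‖toE ((1 - V) *ᵥ x)‖ ≤ c * ‖toE x‖ := by
  letI : CStarAlgebra (Matrix (Fin n) (Fin n) ℂ) :=
    Matrix.instCStarAlgebra
  have hsn : IsStarNormal (1 - V) := by
    constructor
    show _ * _ = _ * _
    simp only [star_sub, star_one, Matrix.star_eq_conjTranspose, sub_mul, mul_sub,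
      Matrix.one_mul, Matrix.mul_one, h1, h2]
    abel
  have hrad := IsStarNormal.spectralRadius_eq_nnnorm ((1 : Matrix (Fin n) (Fin n) ℂ) - V)
  have hspecsub : spectrum ℂ ((1 : Matrix (Fin n) (Fin n) ℂ) - V) ⊆
      (fun μ : ℂ => 1 - μ) '' spectrum ℂ V := by
    intro μ' hμ'
    have := (spectrum.singleton_sub_eq V (1 : ℂ))
    rw [_root_.map_one] at this
    rw [← this] at hμ'
    obtain ⟨a, ha, b, hb, hab⟩ := Set.mem_sub.mp hμ'
    rw [Set.mem_singleton_iff] at ha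
    exact ⟨b, hb, by rw [← hab, ha]⟩
  have hnorm : ‖(1 : Matrix (Fin n) (Fin n) ℂ) - V‖ ≤ c := by
    have hle : spectralRadius ℂ ((1 : Matrix (Fin n) (Fin n) ℂ) - V) ≤
        ENNReal.ofReal c := by
      rw [spectralRadius]
      refine iSup₂_le fun μ' hμ' => ?_
      obtain ⟨μ, hμ, rfl⟩ := hspecsub hμ'
      have h : ‖(1 : ℂ) - μ‖ ≤ c := hspec μ hμ
      rw [← ENNReal.ofReal_coe_nnreal]
      exact ENNReal.ofReal_le_ofReal (by simpa using h)
    rw [hrad] at hle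
    have h2 := ENNReal.toReal_mono ENNReal.ofReal_ne_top hle
    rw [ENNReal.toReal_ofReal hc, ENNReal.coe_toReal, coe_nnnorm] at h2
    exact h2
  have hmv := Matrix.l2_opNorm_mulVec ((1 : Matrix (Fin n) (Fin n) ℂ) - V) (toE x)
  calc ‖toE (((1 : Matrix (Fin n) (Fin n) ℂ) - V) *ᵥ x)‖
      ≤ ‖(1 : Matrix (Fin n) (Fin n) ℂ) - V‖ * ‖toE x‖ := hmv
  _ ≤ c * ‖toE x‖ := mul_le_mul_of_nonneg_right hnorm (norm_nonneg _)

end SpectralBound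

lemma abs_one_sub_exp_le {s : ℝ} : ‖1 - Complex.exp (Complex.I * s)‖ ≤ |s| := by
  rw [mul_comm, Complex.exp_mul_I]
  have hre : (1 - (Complex.cos s + Complex.sin s * Complex.I)).re = 1 - Real.cos s := by
    simp [Complex.cos_ofReal_re, Complex.sin_ofReal_im]
  have him : (1 - (Complex.cos s + Complex.sin s * Complex.I)).im = -Real.sin s := by
    simp [Complex.cos_ofReal_im, Complex.sin_ofReal_re]
  rw [Complex.norm_def, Complex.normSq_apply, hre, him]
  have h2 : (1 - Real.cos s) * (1 - Real.cos s) + -Real.sin s * -Real.sin s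
      = 4 * ((1 - Real.cos s) / 2) := by
    have := Real.sin_sq_add_cos_sq s
    ring_nf
    nlinarith [Real.sin_sq_add_cos_sq s]
  rw [h2, Real.sqrt_mul (by norm_num : (0:ℝ) ≤ 4), show Real.sqrt 4 = 2 by
    rw [show (4:ℝ) = 2^2 by norm_num, Real.sqrt_sq (by norm_num : (0:ℝ) ≤ 2)]]
  rw [← Real.abs_sin_half]
  calc 2 * |Real.sin (s / 2)| ≤ 2 * |s / 2| :=
        mul_le_mul_of_nonneg_left Real.abs_sin_le_abs (by norm_num)
  _ = |s| := by rw [abs_div]; simp; ring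

end AuxQD

/-- Theorem 1(ii): if all eigenvalues of `U₁†U₂` lie on an arc of length `Θ ∈ (0, 2π]`
and `U₁, U₂` can be discriminated with one-sided error `ε` by a `T`-query procedure,
then `T ≥ 2√(1 - ε²) / Θ`. -/
theorem one_sided_error_query_lower_bound (n m T : ℕ)
    (U₁ U₂ : Matrix (Fin n) (Fin n) ℂ)
    (hU₁ : U₁ ∈ Matrix.unitaryGroup (Fin n) ℂ) (hU₂ : U₂ ∈ Matrix.unitaryGroup (Fin n) ℂ)
    (Θ θ₀ : ℝ) (hΘ0 : 0 < Θ) (hΘ2π : Θ ≤ 2 * Real.pi)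
    (hspec : ∀ lam ∈ spectrum ℂ (U₁ᴴ * U₂), ∃ t ∈ Set.Icc (0 : ℝ) Θ,
      lam = Complex.exp (Complex.I * (θ₀ + t)))
    (φ₀ : Fin n × Fin m → ℂ) (hφ₀ : star φ₀ ⬝ᵥ φ₀ = 1)
    (W : ℕ → Matrix (Fin n × Fin m) (Fin n × Fin m) ℂ)
    (hW : ∀ k ≤ T, W k ∈ Matrix.unitaryGroup (Fin n × Fin m) ℂ)
    (ψ₁ ψ₂ : ℕ → (Fin n × Fin m → ℂ))
    (hψ₁0 : ψ₁ 0 = W 0 *ᵥ φ₀) (hψ₂0 : ψ₂ 0 = W 0 *ᵥ φ₀)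
    (hψ₁s : ∀ k < T, ψ₁ (k + 1) =
      W (k + 1) *ᵥ ((U₁ ⊗ₖ (1 : Matrix (Fin m) (Fin m) ℂ)) *ᵥ ψ₁ k))
    (hψ₂s : ∀ k < T, ψ₂ (k + 1) =
      W (k + 1) *ᵥ ((U₂ ⊗ₖ (1 : Matrix (Fin m) (Fin m) ℂ)) *ᵥ ψ₂ k))
    (ε : ℝ) (hε : ε ∈ Set.Icc (0 : ℝ) 1)
    (P₀ P₁ P₂ : Matrix (Fin n × Fin m) (Fin n × Fin m) ℂ)
    (hP₀ : P₀.PosSemidef) (hP₁ : P₁.PosSemidef) (hP₂ : P₂.PosSemidef)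
    (hsum : P₀ + P₁ + P₂ = 1)
    (he₁ : star (ψ₂ T) ⬝ᵥ (P₁ *ᵥ ψ₂ T) = 0) (he₂ : star (ψ₁ T) ⬝ᵥ (P₂ *ᵥ ψ₁ T) = 0)
    (hi₁ : star (ψ₁ T) ⬝ᵥ (P₀ *ᵥ ψ₁ T) ≤ ((ε : ℝ) : ℂ))
    (hi₂ : star (ψ₂ T) ⬝ᵥ (P₀ *ᵥ ψ₂ T) ≤ ((ε : ℝ) : ℂ)) :
    2 * Real.sqrt (1 - ε ^ 2) / Θ ≤ (T : ℝ) := by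
  have hε0 := hε.1
  have hε1 := hε.2
  have hΘ2 : (0:ℝ) ≤ Θ / 2 := by linarith
  -- unitarity facts
  have h₁₁ : U₁ * U₁ᴴ = 1 := by
    have := Matrix.mem_unitaryGroup_iff.mp hU₁; rwa [Matrix.star_eq_conjTranspose] at this
  have h₂₂' : U₂ᴴ * U₂ = 1 := by
    have := Matrix.mem_unitaryGroup_iff'.mp hU₂; rwa [Matrix.star_eq_conjTranspose] at this
  have h₂₂ : U₂ * U₂ᴴ = 1 := by
    have := Matrix.mem_unitaryGroup_iff.mp hU₂; rwa [Matrix.star_eq_conjTranspose] at this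
  -- the rotation scalar
  set γ : ℝ := θ₀ + Θ / 2 with hγ
  set b : ℂ := Complex.exp (Complex.I * γ) with hb
  have hbabs : ‖b‖ = 1 := by
    rw [hb, Complex.norm_exp]
    simp
  have hbne : b ≠ 0 := Complex.exp_ne_zero _
  have hbnorm : ‖b‖ = 1 := hbabs
  set M : Matrix (Fin n) (Fin n) ℂ := U₁ᴴ * U₂ with hM
  set V : Matrix (Fin n) (Fin n) ℂ := b⁻¹ • M with hV
  -- M is unitary
  have hMct : Mᴴ = U₂ᴴ * U₁ := by
    rw [hM, Matrix.conjTranspose_mul, Matrix.conjTranspose_conjTranspose]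
  have hM1 : Mᴴ * M = 1 := by
    rw [hMct, hM, Matrix.mul_assoc, ← Matrix.mul_assoc U₁, h₁₁, Matrix.one_mul, h₂₂']
  have h₁₁' : U₁ᴴ * U₁ = 1 := by
    have := Matrix.mem_unitaryGroup_iff'.mp hU₁; rwa [Matrix.star_eq_conjTranspose] at this
  have hM2 : M * Mᴴ = 1 := by
    rw [hMct, hM, Matrix.mul_assoc, ← Matrix.mul_assoc U₂, h₂₂, Matrix.one_mul, h₁₁']
  -- scalar facts
  have hbinv_abs : ‖b⁻¹‖ = 1 := by rw [norm_inv, hbabs]; norm_num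
  have hconj_mul : (starRingEnd ℂ) b⁻¹ * b⁻¹ = 1 := by
    rw [Complex.conj_mul']
    rw [hbinv_abs]; norm_num
  -- V is unitary
  have hVct : Vᴴ = (starRingEnd ℂ) b⁻¹ • Mᴴ := by
    rw [hV, Matrix.conjTranspose_smul]
    rfl
  have hV1 : Vᴴ * V = 1 := by
    rw [hVct, hV, Matrix.smul_mul, Matrix.mul_smul, smul_smul, hconj_mul, one_smul, hM1]
  have hV2 : V * Vᴴ = 1 := by
    rw [hVct, hV, Matrix.smul_mul, Matrix.mul_smul, smul_smul, mul_comm, hconj_mul, one_smul, hM2]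
  -- spectrum of V lies near 1
  have hVspec : ∀ μ ∈ spectrum ℂ V, ‖1 - μ‖ ≤ Θ / 2 := by
    intro μ hμ
    have hμ' : ∃ lam ∈ spectrum ℂ M, μ = b⁻¹ * lam := by
      have hsmul := spectrum.unit_smul_eq_smul (a := M) (r := (Units.mk0 b hbne)⁻¹)
      have hcoe : ((Units.mk0 b hbne)⁻¹ : ℂˣ) • M = b⁻¹ • M := by
        rw [Units.smul_def]
        norm_num
      rw [hV, ← hcoe, hsmul] at hμ
      obtain ⟨lam, hlam, heq⟩ := hμ
      refine ⟨lam, hlam, ?_⟩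
      rw [← heq]
      simp [smul_eq_mul]
    obtain ⟨lam, hlam, hlameq⟩ := hμ'
    obtain ⟨t, ht, hlamval⟩ := hspec lam hlam
    have hμval : μ = Complex.exp (Complex.I * ((t - Θ / 2 : ℝ) : ℂ)) := by
      rw [hlameq, hlamval, hb, ← Complex.exp_neg, ← Complex.exp_add]
      congr 1
      rw [hγ]
      push_cast
      ring
    have habs : ‖1 - μ‖ ≤ |t - Θ / 2| := by
      rw [hμval]; exact abs_one_sub_exp_le
    refine habs.trans ?_
    rw [abs_le]
    constructor
    · linarith [ht.1]
    · linarith [ht.2]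
  have hVmul : ∀ x : Fin n → ℂ, ‖toE ((1 - V) *ᵥ x)‖ ≤ (Θ / 2) * ‖toE x‖ :=
    norm_one_sub_mulVec hV1 hV2 hΘ2 hVspec
  have hKmul : ∀ y : Fin n × Fin m → ℂ,
      ‖toE (((((1 : Matrix (Fin n) (Fin n) ℂ) - V) ⊗ₖ (1 : Matrix (Fin m) (Fin m) ℂ))) *ᵥ y)‖
        ≤ (Θ / 2) * ‖toE y‖ := kron_norm_le hΘ2 hVmul
  -- states have unit norm
  have hφnorm : ‖toE φ₀‖ = 1 := by
    have h1 : (1 : ℂ) = ((‖toE φ₀‖ : ℂ)) ^ 2 := by rw [← hφ₀, dot_self_eq]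
    have h2 : ‖toE φ₀‖ ^ 2 = 1 := by exact_mod_cast h1.symm
    nlinarith [norm_nonneg (toE φ₀)]
  have hst : ∀ k, k ≤ T → ‖toE (ψ₁ k)‖ = 1 ∧ ‖toE (ψ₂ k)‖ = 1 := by
    intro k
    induction k with
    | zero =>
      intro _
      rw [hψ₁0, hψ₂0, unitary_norm (hW 0 (Nat.zero_le _)), hφnorm]
      exact ⟨rfl, rfl⟩
    | succ k ih =>
      intro hk
      have hklt : k < T := Nat.lt_of_succ_le hk
      obtain ⟨ih1, ih2⟩ := ih hklt.le
      constructor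
      · rw [hψ₁s k hklt, unitary_norm (hW _ hk), unitary_norm (kron_one_unitary hU₁), ih1]
      · rw [hψ₂s k hklt, unitary_norm (hW _ hk), unitary_norm (kron_one_unitary hU₂), ih2]
  -- the hybrid bound
  have hD : ∀ k, k ≤ T → ‖toE (b ^ k • ψ₁ k - ψ₂ k)‖ ≤ (k : ℝ) * (Θ / 2) := by
    intro k
    induction k with
    | zero =>
      intro _
      rw [pow_zero, one_smul, hψ₁0, hψ₂0, sub_self, toE_zero, norm_zero]
      simp
    | succ k ih =>
      intro hk
      have hklt : k < T := Nat.lt_of_succ_le hk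
      have ihk := ih hklt.le
      set Q₁ : Matrix (Fin n × Fin m) (Fin n × Fin m) ℂ :=
        U₁ ⊗ₖ (1 : Matrix (Fin m) (Fin m) ℂ) with hQ₁
      set Q₂ : Matrix (Fin n × Fin m) (Fin n × Fin m) ℂ :=
        U₂ ⊗ₖ (1 : Matrix (Fin m) (Fin m) ℂ) with hQ₂
      set N : Matrix (Fin n × Fin m) (Fin n × Fin m) ℂ :=
        ((1 : Matrix (Fin n) (Fin n) ℂ) - V) ⊗ₖ (1 : Matrix (Fin m) (Fin m) ℂ) with hN
      have hQN : Q₁ * N = Q₁ - b⁻¹ • Q₂ := by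
        rw [hQ₁, hN, ← Matrix.mul_kronecker_mul, Matrix.one_mul]
        have hU1V : U₁ * ((1 : Matrix (Fin n) (Fin n) ℂ) - V) = U₁ + (-b⁻¹) • U₂ := by
          rw [Matrix.mul_sub, Matrix.mul_one, hV, hM, Matrix.mul_smul, ← Matrix.mul_assoc,
            h₁₁, Matrix.one_mul, sub_eq_add_neg, neg_smul]
        rw [hU1V, Matrix.add_kronecker, Matrix.smul_kronecker, neg_smul, ← sub_eq_add_neg, hQ₂]
      have inner_eq : Q₁ *ᵥ (b • (b ^ k • ψ₁ k - ψ₂ k) + b • (N *ᵥ ψ₂ k))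
          = b ^ (k + 1) • (Q₁ *ᵥ ψ₁ k) - Q₂ *ᵥ ψ₂ k := by
        rw [Matrix.mulVec_add, Matrix.mulVec_smul, Matrix.mulVec_smul, Matrix.mulVec_sub,
          Matrix.mulVec_smul, Matrix.mulVec_mulVec, hQN, Matrix.sub_mulVec,
          Matrix.smul_mulVec]
        rw [smul_sub, smul_sub, smul_smul, smul_smul, mul_inv_cancel₀ hbne, one_smul,
          ← pow_succ']
        abel
      have key : b ^ (k + 1) • ψ₁ (k + 1) - ψ₂ (k + 1)
          = W (k + 1) *ᵥ (Q₁ *ᵥ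
              (b • (b ^ k • ψ₁ k - ψ₂ k) + b • (N *ᵥ ψ₂ k))) := by
        rw [hψ₁s k hklt, hψ₂s k hklt, inner_eq, Matrix.mulVec_sub, Matrix.mulVec_smul]
      rw [key, unitary_norm (hW _ hk), unitary_norm (kron_one_unitary hU₁), toE_add,
        toE_smul, toE_smul]
      calc ‖b • toE (b ^ k • ψ₁ k - ψ₂ k) + b • toE (N *ᵥ ψ₂ k)‖
          ≤ ‖b • toE (b ^ k • ψ₁ k - ψ₂ k)‖ + ‖b • toE (N *ᵥ ψ₂ k)‖ := norm_add_le _ _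
      _ = ‖toE (b ^ k • ψ₁ k - ψ₂ k)‖ + ‖toE (N *ᵥ ψ₂ k)‖ := by
          rw [norm_smul, norm_smul, hbnorm, one_mul, one_mul]
      _ ≤ (k : ℝ) * (Θ / 2) + (Θ / 2) * ‖toE (ψ₂ k)‖ := add_le_add ihk (hKmul _)
      _ = (k : ℝ) * (Θ / 2) + (Θ / 2) := by rw [(hst k hklt.le).2, mul_one]
      _ ≤ ((k : ℕ) + 1 : ℝ) * (Θ / 2) := by push_cast; linarith
      _ = ((k + 1 : ℕ) : ℝ) * (Θ / 2) := by push_cast; ring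
  -- overlap bound from the POVM
  have hover : ‖star (ψ₁ T) ⬝ᵥ ψ₂ T‖ ≤ ε := by
    have hsplit : star (ψ₁ T) ⬝ᵥ ψ₂ T =
        star (ψ₁ T) ⬝ᵥ (P₀ *ᵥ ψ₂ T) + star (ψ₁ T) ⬝ᵥ (P₁ *ᵥ ψ₂ T)
          + star (ψ₁ T) ⬝ᵥ (P₂ *ᵥ ψ₂ T) := by
      rw [← dotProduct_add, ← dotProduct_add, ← Matrix.add_mulVec, ← Matrix.add_mulVec, hsum,
        Matrix.one_mulVec]
    have h0 : ‖star (ψ₁ T) ⬝ᵥ (P₀ *ᵥ ψ₂ T)‖ ≤ ε := by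
      refine le_trans (psd_cs hP₀ _ _) ?_
      have hr1 : Complex.re (star (ψ₁ T) ⬝ᵥ (P₀ *ᵥ ψ₁ T)) ≤ ε := by
        have := (Complex.le_def.mp hi₁).1
        simpa using this
      have hr2 : Complex.re (star (ψ₂ T) ⬝ᵥ (P₀ *ᵥ ψ₂ T)) ≤ ε := by
        have := (Complex.le_def.mp hi₂).1
        simpa using this
      calc Real.sqrt (Complex.re (star (ψ₁ T) ⬝ᵥ (P₀ *ᵥ ψ₁ T))) *
            Real.sqrt (Complex.re (star (ψ₂ T) ⬝ᵥ (P₀ *ᵥ ψ₂ T)))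
          ≤ Real.sqrt ε * Real.sqrt ε :=
            mul_le_mul (Real.sqrt_le_sqrt hr1) (Real.sqrt_le_sqrt hr2)
              (Real.sqrt_nonneg _) (Real.sqrt_nonneg _)
      _ = ε := Real.mul_self_sqrt hε0
    have h1 : ‖star (ψ₁ T) ⬝ᵥ (P₁ *ᵥ ψ₂ T)‖ ≤ 0 := by
      refine le_trans (psd_cs hP₁ _ _) ?_
      rw [he₁]
      simp
    have h2 : ‖star (ψ₁ T) ⬝ᵥ (P₂ *ᵥ ψ₂ T)‖ ≤ 0 := by
      refine le_trans (psd_cs hP₂ _ _) ?_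
      rw [he₂]
      simp
    calc ‖star (ψ₁ T) ⬝ᵥ ψ₂ T‖
        ≤ ‖star (ψ₁ T) ⬝ᵥ (P₀ *ᵥ ψ₂ T)‖ + ‖star (ψ₁ T) ⬝ᵥ (P₁ *ᵥ ψ₂ T)‖
          + ‖star (ψ₁ T) ⬝ᵥ (P₂ *ᵥ ψ₂ T)‖ := by
          rw [hsplit]
          exact le_trans (norm_add_le _ _)
            (add_le_add_left (norm_add_le _ _) _)
    _ ≤ ε + 0 + 0 := add_le_add (add_le_add h0 h1) h2
    _ = ε := by ring
  -- final computation
  have hA : ‖toE (b ^ T • ψ₁ T)‖ = 1 := by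
    rw [toE_smul, norm_smul, norm_pow, hbnorm, one_pow, one_mul, (hst T le_rfl).1]
  have hB : ‖toE (ψ₂ T)‖ = 1 := (hst T le_rfl).2
  have hre : Complex.re (inner ℂ (toE (b ^ T • ψ₁ T)) (toE (ψ₂ T)) : ℂ) ≤ ε := by
    rw [toE_smul, inner_smul_left]
    refine le_trans (Complex.re_le_norm _) ?_
    rw [norm_mul, ← dot_eq_inner]
    have : ‖(starRingEnd ℂ) (b ^ T)‖ = 1 := by
      rw [Complex.norm_conj, norm_pow, hbabs, one_pow]
    rw [this, one_mul]
    exact hover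
  have hsq : (2 : ℝ) - 2 * ε ≤ ‖toE (b ^ T • ψ₁ T) - toE (ψ₂ T)‖ ^ 2 := by
    have hns := norm_sub_sq (𝕜 := ℂ) (toE (b ^ T • ψ₁ T)) (toE (ψ₂ T))
    rw [hA, hB] at hns
    rw [hns]
    have : RCLike.re (inner ℂ (toE (b ^ T • ψ₁ T)) (toE (ψ₂ T)) : ℂ)
        = Complex.re (inner ℂ (toE (b ^ T • ψ₁ T)) (toE (ψ₂ T)) : ℂ) := rfl
    rw [this]
    nlinarith [hre]
  have hd : ‖toE (b ^ T • ψ₁ T) - toE (ψ₂ T)‖ ≤ (T : ℝ) * (Θ / 2) := by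
    rw [← toE_sub]
    exact hD T le_rfl
  have hfinal : Real.sqrt (1 - ε ^ 2) ≤ (T : ℝ) * (Θ / 2) := by
    calc Real.sqrt (1 - ε ^ 2) ≤ Real.sqrt (‖toE (b ^ T • ψ₁ T) - toE (ψ₂ T)‖ ^ 2) := by
          refine Real.sqrt_le_sqrt ?_
          nlinarith [hsq, sq_nonneg (1 - ε)]
    _ = ‖toE (b ^ T • ψ₁ T) - toE (ψ₂ T)‖ := Real.sqrt_sq (norm_nonneg _)
    _ ≤ (T : ℝ) * (Θ / 2) := hd
  rw [div_le_iff₀ hΘ0]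
  linarith
end
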